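/- arXiv:2604.07478 — 8 statements merged into one kernel-verified Lean document; each statement's English description precedes it below -/
import Mathlib

section
/- For every dimension d ≥ 2 and board length n ≥ 3, and every ε ∈ (0,1), the mixing time of the Rook's Walk satisfies the lower bound t_mix(ε) ≥ ( log( d(n−1)/(2n) ) + log( (1−ε)/ε ) ) / ( 2·log( d(n−1)/(d(n−1)−n) ) ). -/
open Finset

noncomputable section

/-! Wilson's method. The statistic `f x = #{i | x i = a₀} - d / n` is an eigenfunction of the walk
with eigenvalue `λ = 1 - n / (d (n - 1))`, and one step of the walk sends `f²` to at most
`λ² f² + (1 - λ²) d (n - 1)² / n²`. Hence after `t` steps from the corner `(a₀, …, a₀)` the mean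
of `f` is `λᵗ d (n - 1) / n` while its variance stays below `d (n - 1)² / n²`; under the uniform
distribution `f` has mean `0` and variance `d (n - 1) / n²`. A Cauchy–Schwarz argument turns
these moments into `λ^(2t) ≤ 2n / (d (n - 1)) · ε / (1 - ε)` whenever the walk is `ε`-close to
uniform at time `t`, and taking logarithms gives the bound. This needs some `t` with `d(t) ≤ ε` to
exist (otherwise `t_mix ε = sInf ∅ = 0`), which is a Doeblin argument: for `n ≥ 3` every entry of
`P^(d+1)` is positive. -/

/-- Total variation distance between two distributions on a finite set. -/
def tv {S : Type*} [Fintype S] (μ ν : S → ℝ) : ℝ :=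
  (∑ s, |μ s - ν s|) / 2

/-- The state space of the Rook's Walk: a `d`-dimensional board of side length `n`. -/
abbrev RW.State (n d : ℕ) : Type := Fin d → Fin n

/-- The transition matrix of the Rook's Walk on `{1,…,n}^d`. -/
def RW.P (n d : ℕ) : Matrix (RW.State n d) (RW.State n d) ℝ :=
  Matrix.of fun x y =>
    if hammingDist x y = 1 then 1 / ((d : ℝ) * ((n : ℝ) - 1)) else 0

/-- The (uniform) stationary distribution of the Rook's Walk. -/
def RW.pi (n d : ℕ) : RW.State n d → ℝ := fun _ => 1 / (n : ℝ) ^ d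

/-- Worst-case total variation distance to stationarity at time `t`. -/
def RW.dist (n d : ℕ) (t : ℕ) : ℝ :=
  ⨆ x : RW.State n d, tv ((RW.P n d ^ t) x) (RW.pi n d)

/-- The mixing time of the Rook's Walk. -/
def RW.tmix (n d : ℕ) (ε : ℝ) : ℕ := sInf {t : ℕ | RW.dist n d t ≤ ε}

section MarkovChain

open Matrix

variable {S : Type*} [Fintype S]

theorem tv_nonneg (μ ν : S → ℝ) : 0 ≤ tv μ ν :=
  div_nonneg (sum_nonneg fun _ _ => abs_nonneg _) zero_le_two

/-- Weighted Cauchy–Schwarz with weights `|μ - ν|`, which sum to `2 * tv μ ν`. -/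
theorem sq_dotProduct_sub_le_tv_mul {μ ν : S → ℝ} (hμ0 : 0 ≤ μ) (hν0 : 0 ≤ ν)
    (hμ1 : ∑ s, μ s = 1) (hν1 : ∑ s, ν s = 1) (f : S → ℝ) (c : ℝ) :
    (μ ⬝ᵥ f - ν ⬝ᵥ f) ^ 2 ≤
      2 * tv μ ν * (μ ⬝ᵥ (fun s => (f s - c) ^ 2) + ν ⬝ᵥ (fun s => (f s - c) ^ 2)) := by
  have hcentered : μ ⬝ᵥ f - ν ⬝ᵥ f = ∑ s, (μ s - ν s) * (f s - c) := by
    simp only [dotProduct, mul_sub, sub_mul, sum_sub_distrib, ← sum_mul, hμ1, hν1]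
    ring
  have hweights : ∑ s, |μ s - ν s| = 2 * tv μ ν := by unfold tv; ring
  rw [hcentered, ← hweights, dotProduct, dotProduct, ← sum_add_distrib]
  calc (∑ s, (μ s - ν s) * (f s - c)) ^ 2
      ≤ (∑ s, |μ s - ν s|) * ∑ s, |μ s - ν s| * (f s - c) ^ 2 :=
        sum_sq_le_sum_mul_sum_of_sq_le_mul _ (fun _ _ => abs_nonneg _)
          (fun _ _ => mul_nonneg (abs_nonneg _) (sq_nonneg _))
          (fun s _ => by rw [mul_pow, ← mul_assoc, ← sq, sq_abs])
    _ ≤ (∑ s, |μ s - ν s|) * ∑ s, (μ s * (f s - c) ^ 2 + ν s * (f s - c) ^ 2) := by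
        gcongr with s
        rw [← add_mul]
        gcongr
        exact abs_sub_le_of_nonneg_of_le (hμ0 s) (le_add_of_nonneg_right (hν0 s)) (hν0 s)
          (le_add_of_nonneg_left (hμ0 s))

theorem sq_dotProduct_sub_mul_le_of_tv_le {μ ν : S → ℝ} (hμ0 : 0 ≤ μ) (hν0 : 0 ≤ ν)
    (hμ1 : ∑ s, μ s = 1) (hν1 : ∑ s, ν s = 1) {ε : ℝ} (hε : tv μ ν ≤ ε) (f : S → ℝ) :
    (μ ⬝ᵥ f - ν ⬝ᵥ f) ^ 2 * (1 - ε) ≤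
      2 * ε * ((μ ⬝ᵥ f ^ 2 - (μ ⬝ᵥ f) ^ 2) + (ν ⬝ᵥ f ^ 2 - (ν ⬝ᵥ f) ^ 2)) := by
  set c := (μ ⬝ᵥ f + ν ⬝ᵥ f) / 2
  have hexpand : ∀ w : S → ℝ, ∑ s, w s = 1 →
      w ⬝ᵥ (fun s => (f s - c) ^ 2) = w ⬝ᵥ f ^ 2 - 2 * c * (w ⬝ᵥ f) + c ^ 2 := by
    intro w hw
    rw [← mul_one (c ^ 2), ← hw]
    simp only [dotProduct, Pi.pow_apply, mul_sum, ← sum_sub_distrib, ← sum_add_distrib]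
    exact sum_congr rfl fun s _ => by ring
  have hnonneg : ∀ w : S → ℝ, 0 ≤ w → 0 ≤ w ⬝ᵥ (fun s => (f s - c) ^ 2) :=
    fun w hw => sum_nonneg fun s _ => mul_nonneg (hw s) (sq_nonneg _)
  have hcs := sq_dotProduct_sub_le_tv_mul hμ0 hν0 hμ1 hν1 f c
  have hε' := mul_le_mul_of_nonneg_right (mul_le_mul_of_nonneg_left hε zero_le_two)
    (add_nonneg (hnonneg μ hμ0) (hnonneg ν hν0))
  rw [hexpand μ hμ1, hexpand ν hν1] at hcs hε'
  linear_combination hcs.trans hε'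

variable [DecidableEq S]

theorem sum_abs_vecMul_le_of_le_apply {M : Matrix S S ℝ} (hM : M ∈ rowStochastic ℝ S)
    {δ : ℝ} (hδ : ∀ x y, δ ≤ M x y) {w : S → ℝ} (hw : ∑ x, w x = 0) :
    ∑ y, |(w ᵥ* M) y| ≤ (1 - Fintype.card S * δ) * ∑ x, |w x| := by
  have hshift : ∀ y, (w ᵥ* M) y = ∑ x, w x * (M x y - δ) := fun y => by
    simp only [vecMul, dotProduct, mul_sub, sum_sub_distrib, ← sum_mul, hw, zero_mul, sub_zero]
  calc ∑ y, |(w ᵥ* M) y| ≤ ∑ y, ∑ x, |w x| * (M x y - δ) := by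
        gcongr with y
        rw [hshift]
        refine (abs_sum_le_sum_abs _ _).trans_eq (sum_congr rfl fun x _ => ?_)
        rw [abs_mul, abs_of_nonneg (sub_nonneg.2 (hδ x y))]
    _ = (1 - Fintype.card S * δ) * ∑ x, |w x| := by
        rw [sum_comm, mul_sum]
        refine sum_congr rfl fun x _ => ?_
        rw [← mul_sum, sum_sub_distrib, sum_row_of_mem_rowStochastic hM, sum_const, card_univ,
          nsmul_eq_mul, mul_comm]

theorem sum_abs_pow_apply_sub_le {M : Matrix S S ℝ} (hM : M ∈ rowStochastic ℝ S)
    {π : S → ℝ} (hπM : π ᵥ* M = π) (hπ0 : 0 ≤ π) (hπ1 : ∑ x, π x = 1)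
    {δ : ℝ} (hδ : ∀ x y, δ ≤ M x y) (m : ℕ) (x : S) :
    ∑ y, |(M ^ m) x y - π y| ≤ 2 * (1 - Fintype.card S * δ) ^ m := by
  have hθ : 0 ≤ 1 - Fintype.card S * δ := by
    have hx := sum_row_of_mem_rowStochastic hM x
    have := sum_le_sum fun y (_ : y ∈ univ) => hδ x y
    rw [sum_const, card_univ, nsmul_eq_mul, hx] at this
    linarith
  induction m with
  | zero =>
    have h1 : (M ^ 0) ∈ rowStochastic ℝ S := pow_mem hM 0
    calc ∑ y, |(M ^ 0) x y - π y| ≤ ∑ y, ((M ^ 0) x y + π y) := by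
          gcongr with y
          exact abs_sub_le_of_nonneg_of_le (nonneg_of_mem_rowStochastic h1)
            (le_add_of_nonneg_right (hπ0 y)) (hπ0 y)
            (le_add_of_nonneg_left (nonneg_of_mem_rowStochastic h1))
      _ = 2 * (1 - Fintype.card S * δ) ^ 0 := by
          rw [sum_add_distrib, hπ1, sum_row_of_mem_rowStochastic h1]
          norm_num
  | succ m ih =>
    have hrow : (M ^ (m + 1)) x - π = ((M ^ m) x - π) ᵥ* M := by
      rw [sub_vecMul, hπM, pow_succ, mul_apply_eq_vecMul]
    have hw : ∑ y, ((M ^ m) x - π) y = 0 := by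
      simp only [Pi.sub_apply, sum_sub_distrib, hπ1,
        sum_row_of_mem_rowStochastic (pow_mem hM m), sub_self]
    calc ∑ y, |(M ^ (m + 1)) x y - π y| = ∑ y, |(((M ^ m) x - π) ᵥ* M) y| := by
          rw [← hrow]; rfl
      _ ≤ (1 - Fintype.card S * δ) * ∑ y, |(M ^ m) x y - π y| :=
          sum_abs_vecMul_le_of_le_apply hM hδ hw
      _ ≤ 2 * (1 - Fintype.card S * δ) ^ (m + 1) := by
          rw [pow_succ]; nlinarith

theorem exists_forall_sum_abs_pow_apply_sub_le {M : Matrix S S ℝ} (hM : M ∈ rowStochastic ℝ S)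
    {π : S → ℝ} (hπM : π ᵥ* M = π) (hπ0 : 0 ≤ π) (hπ1 : ∑ x, π x = 1)
    {k : ℕ} (hk : ∀ x y, 0 < (M ^ k) x y) {ε : ℝ} (hε : 0 < ε) :
    ∃ t, ∀ x, ∑ y, |(M ^ t) x y - π y| ≤ ε := by
  obtain ⟨s, -⟩ : (univ : Finset S).Nonempty := nonempty_of_sum_ne_zero (hπ1.trans_ne one_ne_zero)
  have : Nonempty S := ⟨s⟩
  obtain ⟨p, hp⟩ := Finite.exists_min fun p : S × S => (M ^ k) p.1 p.2
  set δ := (M ^ k) p.1 p.2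
  have hMk : M ^ k ∈ rowStochastic ℝ S := pow_mem hM k
  have hπMk : ∀ j, π ᵥ* M ^ j = π := by
    intro j
    induction j with
    | zero => simp
    | succ j ih => rw [pow_succ, ← vecMul_vecMul, ih, hπM]
  have hθ : 1 - Fintype.card S * δ < 1 := by
    have : (0 : ℝ) < Fintype.card S := Nat.cast_pos.2 Fintype.card_pos
    have := mul_pos this (hk p.1 p.2)
    linarith
  obtain ⟨m, hm⟩ := exists_pow_lt_of_lt_one (half_pos hε) hθ
  refine ⟨k * m, fun x => ?_⟩
  rw [pow_mul]
  have := sum_abs_pow_apply_sub_le hMk (hπMk k) hπ0 hπ1 (fun x y => hp (x, y)) m x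
  linarith

theorem pow_mulVec_eq_of_mulVec_eq {M : Matrix S S ℝ} {f : S → ℝ} {c : ℝ} (h : M *ᵥ f = c • f)
    (t : ℕ) : M ^ t *ᵥ f = c ^ t • f := by
  induction t with
  | zero => simp
  | succ t ih => rw [pow_succ', ← mulVec_mulVec, ih, mulVec_smul, h, smul_smul, pow_succ]

theorem pow_mulVec_le_of_mulVec_le {M : Matrix S S ℝ} (hM : M ∈ rowStochastic ℝ S)
    {φ : S → ℝ} {a V : ℝ} (ha : 0 ≤ a) (h : ∀ x, (M *ᵥ φ) x ≤ a * φ x + (1 - a) * V)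
    (t : ℕ) (x : S) : (M ^ t *ᵥ φ) x ≤ a ^ t * φ x + (1 - a ^ t) * V := by
  induction t with
  | zero => simp
  | succ t ih =>
    have hMt : M ^ t ∈ rowStochastic ℝ S := pow_mem hM t
    calc (M ^ (t + 1) *ᵥ φ) x = ∑ y, (M ^ t) x y * (M *ᵥ φ) y := by
          rw [pow_succ, ← mulVec_mulVec]; rfl
      _ ≤ ∑ y, (M ^ t) x y * (a * φ y + (1 - a) * V) := by
          gcongr with y
          · exact nonneg_of_mem_rowStochastic hMt
          · exact h y
      _ = a * (M ^ t *ᵥ φ) x + (1 - a) * V := by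
          simp only [mul_add, sum_add_distrib, ← sum_mul, sum_row_of_mem_rowStochastic hMt,
            one_mul, mulVec, dotProduct, mul_sum]
          congr 1
          exact sum_congr rfl fun y _ => by ring
      _ ≤ a ^ (t + 1) * φ x + (1 - a ^ (t + 1)) * V := by
          have := mul_le_mul_of_nonneg_left ih ha
          rw [pow_succ]
          linarith

end MarkovChain

section Hamming

variable {ι β : Type*} [Fintype ι] [DecidableEq ι] [DecidableEq β]

open Function

theorem hammingDist_update_self {x : ι → β} {i : ι} {a : β} (ha : a ≠ x i) :
    hammingDist x (update x i a) = 1 := by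
  rw [hammingDist, card_eq_one]
  refine ⟨i, ext fun j => ?_⟩
  rcases eq_or_ne j i with rfl | hj
  · simp [ha.symm]
  · simp [hj]

theorem hammingDist_eq_one_iff {x y : ι → β} :
    hammingDist x y = 1 ↔ ∃ i, ∃ a ≠ x i, y = update x i a := by
  refine ⟨fun h => ?_, fun ⟨i, a, ha, hy⟩ => hy ▸ hammingDist_update_self ha⟩
  obtain ⟨i, hi⟩ := card_eq_one.1 h
  have hdiff : ∀ j, x j ≠ y j ↔ j = i := fun j => by
    simpa using congrArg (j ∈ ·) hi
  refine ⟨i, y i, ((hdiff i).2 rfl).symm, funext fun j => ?_⟩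
  rcases eq_or_ne j i with rfl | hj
  · simp
  · rw [update_of_ne hj]
    exact (not_not.1 (mt (hdiff j).1 hj)).symm

theorem sum_hammingDist_eq_one [Fintype β] {M : Type*} [AddCommMonoid M] (x : ι → β)
    (F : (ι → β) → M) :
    ∑ y with hammingDist x y = 1, F y = ∑ i, ∑ a ∈ univ.erase (x i), F (update x i a) := by
  rw [sum_sigma']
  refine (sum_bij (fun p _ => update x p.1 p.2) ?_ ?_ ?_ fun _ _ => rfl).symm
  · rintro ⟨i, a⟩ hp
    simp only [mem_sigma, mem_erase] at hp
    simpa using hammingDist_update_self hp.2.1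
  · rintro ⟨i, a⟩ hp ⟨j, b⟩ hq h
    simp only [mem_sigma, mem_erase] at hp hq
    rcases eq_or_ne i j with rfl | hij
    · simpa using congrFun h i
    · exact absurd (by simpa [update_of_ne hij] using congrFun h i) hp.2.1
  · intro y hy
    obtain ⟨i, a, ha, rfl⟩ := hammingDist_eq_one_iff.1 (mem_filter.1 hy).2
    exact ⟨⟨i, a⟩, by simpa using ha, rfl⟩

/-- The third symbol is needed when `x` and `y` are adjacent: `z` must then leave `x` without
landing on `y`. -/
theorem exists_hammingDist_eq_one_ne_le [Fintype β] (hβ : 2 < Fintype.card β) {x y : ι → β}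
    (hxy : x ≠ y) :
    ∃ z, hammingDist x z = 1 ∧ z ≠ y ∧ hammingDist z y ≤ max 1 (hammingDist x y - 1) := by
  obtain ⟨i, hi⟩ := Function.ne_iff.1 hxy
  by_cases h1 : hammingDist x y ≤ 1
  · obtain ⟨c, hc⟩ : ({x i, y i}ᶜ : Finset β).Nonempty := by
      rw [← card_pos, card_compl]
      have := card_le_two (a := x i) (b := y i)
      omega
    simp only [mem_compl, mem_insert, mem_singleton, not_or] at hc
    refine ⟨update x i c, hammingDist_update_self hc.1,
      fun h => hc.2 (by rw [← h, update_self]), ?_⟩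
    refine le_max_of_le_left (le_trans (card_le_card fun j => ?_) h1)
    rcases eq_or_ne j i with rfl | hj <;> simp_all [update_of_ne]
  · refine ⟨update x i (y i), hammingDist_update_self hi.symm, fun h => ?_, ?_⟩
    · have := hammingDist_triangle x (update x i (y i)) y
      rw [hammingDist_update_self hi.symm, h, hammingDist_self] at this
      omega
    · refine le_max_of_le_right ?_
      rw [hammingDist, hammingDist, ← card_erase_of_mem (by simpa using hi)]
      refine card_le_card fun j => ?_
      rcases eq_or_ne j i with rfl | hj <;> simp_all [update_of_ne]

end Hamming

theorem Matrix.mul_apply_pos {S : Type*} [Fintype S] {A B : Matrix S S ℝ}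
    (hA : ∀ i j, 0 ≤ A i j) (hB : ∀ i j, 0 ≤ B i j) {x y z : S} (hxz : 0 < A x z)
    (hzy : 0 < B z y) : 0 < (A * B) x y :=
  sum_pos' (fun w _ => mul_nonneg (hA x w) (hB w y)) ⟨z, mem_univ z, mul_pos hxz hzy⟩

namespace RW

open Matrix Function

variable {n d : ℕ}

theorem degree_pos (hn : 2 ≤ n) (hd : 1 ≤ d) : (0 : ℝ) < d * (n - 1) := by
  have : (2 : ℝ) ≤ n := by exact_mod_cast hn
  have : (1 : ℝ) ≤ d := by exact_mod_cast hd
  exact mul_pos (by linarith) (by linarith)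

theorem mulVec_P_apply (φ : State n d → ℝ) (x : State n d) :
    (P n d *ᵥ φ) x = (∑ i, ∑ a ∈ univ.erase (x i), φ (update x i a)) / (d * (n - 1)) := by
  rw [← sum_hammingDist_eq_one, sum_div, sum_filter]
  refine sum_congr rfl fun y _ => ?_
  simp only [P, of_apply]
  split_ifs <;> ring

theorem P_nonneg (hn : 1 ≤ n) (x y : State n d) : 0 ≤ P n d x y := by
  have : (1 : ℝ) ≤ n := by exact_mod_cast hn
  simp only [P, of_apply]
  split_ifs
  · exact div_nonneg zero_le_one (mul_nonneg d.cast_nonneg (by linarith))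
  · exact le_rfl

theorem P_transpose : (P n d)ᵀ = P n d := by
  ext x y
  simp only [transpose_apply, P, of_apply, hammingDist_comm]

theorem P_mem_doublyStochastic (hn : 2 ≤ n) (hd : 1 ≤ d) :
    P n d ∈ doublyStochastic ℝ (State n d) := by
  have hrow : P n d *ᵥ 1 = 1 := funext fun x => by
    simp only [mulVec_P_apply, Pi.one_apply, sum_const, card_erase_of_mem (mem_univ _), card_univ,
      Fintype.card_fin, nsmul_eq_mul, mul_one, Nat.cast_sub (by omega : 1 ≤ n), Nat.cast_one]
    exact div_self (degree_pos hn hd).ne'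
  refine mem_doublyStochastic.2 ⟨P_nonneg (by omega), hrow, ?_⟩
  rw [← P_transpose, vecMul_transpose, hrow]

theorem P_mem_rowStochastic (hn : 2 ≤ n) (hd : 1 ≤ d) : P n d ∈ rowStochastic ℝ (State n d) :=
  (mem_doublyStochastic_iff_mem_rowStochastic_and_mem_colStochastic.1
    (P_mem_doublyStochastic hn hd)).1

theorem pi_nonneg : 0 ≤ pi n d := fun _ => by unfold pi; positivity

theorem sum_pi (hn : 1 ≤ n) : ∑ x, pi n d x = 1 := by
  have : (n : ℝ) ^ d ≠ 0 := pow_ne_zero _ (by exact_mod_cast (by omega : n ≠ 0))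
  simp [pi, this]

theorem pi_vecMul_P (hn : 2 ≤ n) (hd : 1 ≤ d) : pi n d ᵥ* P n d = pi n d := funext fun y => by
  simp only [vecMul, dotProduct, pi, ← mul_sum,
    sum_col_of_mem_doublyStochastic (P_mem_doublyStochastic hn hd), mul_one]

theorem P_pos_of_hammingDist_eq_one (hn : 2 ≤ n) (hd : 1 ≤ d) {x y : State n d}
    (h : hammingDist x y = 1) : 0 < P n d x y := by
  simp only [P, of_apply, if_pos h]
  exact one_div_pos.2 (degree_pos hn hd)

theorem pow_succ_P_pos_of_ne (hn : 3 ≤ n) (hd : 1 ≤ d) (t : ℕ) {x y : State n d} (hxy : x ≠ y)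
    (hdist : hammingDist x y ≤ t + 1) : 0 < (P n d ^ (t + 1)) x y := by
  have hP := P_mem_doublyStochastic (by omega : 2 ≤ n) hd
  induction t generalizing x with
  | zero =>
    rw [zero_add, pow_one]
    exact P_pos_of_hammingDist_eq_one (by omega) hd (le_antisymm hdist (hammingDist_pos.2 hxy))
  | succ t ih =>
    obtain ⟨z, hxz, hzy, hzy'⟩ :=
      exists_hammingDist_eq_one_ne_le (by rw [Fintype.card_fin]; omega) hxy
    rw [pow_succ']
    exact mul_apply_pos (fun _ _ => nonneg_of_mem_doublyStochastic hP)
      (fun _ _ => nonneg_of_mem_doublyStochastic (pow_mem hP _))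
      (P_pos_of_hammingDist_eq_one (by omega) hd hxz) (ih hzy (by omega))

theorem pow_P_pos (hn : 3 ≤ n) (hd : 1 ≤ d) (x y : State n d) : 0 < (P n d ^ (d + 1)) x y := by
  have hP := P_mem_doublyStochastic (by omega : 2 ≤ n) hd
  have hdist : hammingDist x y ≤ d := by simpa using hammingDist_le_card_fintype (x := x) (y := y)
  rcases ne_or_eq x y with hxy | rfl
  · exact pow_succ_P_pos_of_ne hn hd d hxy (by omega)
  · obtain ⟨k, rfl⟩ : ∃ k, d = k + 1 := ⟨d - 1, by omega⟩
    have : Nontrivial (Fin n) := Fin.nontrivial_iff_two_le.2 (by omega)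
    obtain ⟨a, ha⟩ := exists_ne (x 0)
    have hxz := hammingDist_update_self ha
    rw [pow_succ']
    exact mul_apply_pos (fun _ _ => nonneg_of_mem_doublyStochastic hP)
      (fun _ _ => nonneg_of_mem_doublyStochastic (pow_mem hP _))
      (P_pos_of_hammingDist_eq_one (by omega) hd hxz)
      (pow_succ_P_pos_of_ne hn hd k (fun h => ha (by rw [← h, update_self]))
        (by rw [hammingDist_comm, hxz]; omega))

theorem tv_le_dist (t : ℕ) (x : State n d) : tv ((P n d ^ t) x) (pi n d) ≤ dist n d t :=
  le_ciSup (f := fun x => tv ((P n d ^ t) x) (pi n d)) (Set.finite_range _).bddAbove x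

theorem exists_dist_le (hn : 3 ≤ n) (hd : 1 ≤ d) {ε : ℝ} (hε : 0 < ε) : ∃ t, dist n d t ≤ ε := by
  obtain ⟨t, ht⟩ := exists_forall_sum_abs_pow_apply_sub_le (P_mem_rowStochastic (by omega) hd)
    (pi_vecMul_P (by omega) hd) pi_nonneg (sum_pi (by omega)) (pow_P_pos hn hd)
    (mul_pos two_pos hε)
  have : Nonempty (State n d) := ⟨fun _ => ⟨0, by omega⟩⟩
  exact ⟨t, ciSup_le fun x => by unfold tv; linarith [ht x]⟩

def eigenvalue (n d : ℕ) : ℝ := 1 - n / (d * (n - 1))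

theorem eigenvalue_eq (hn : 2 ≤ n) (hd : 1 ≤ d) :
    eigenvalue n d = (d * (n - 1) - n) / (d * (n - 1)) := by
  rw [eigenvalue, sub_div, div_self (degree_pos hn hd).ne']

theorem eigenvalue_pos (hn : 3 ≤ n) (hd : 2 ≤ d) : 0 < eigenvalue n d := by
  have : (3 : ℝ) ≤ n := by exact_mod_cast hn
  have : (2 : ℝ) ≤ d := by exact_mod_cast hd
  rw [eigenvalue_eq (by omega) (by omega)]
  exact div_pos (by nlinarith) (by nlinarith)

theorem eigenvalue_lt_one (hn : 2 ≤ n) (hd : 1 ≤ d) : eigenvalue n d < 1 :=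
  sub_lt_self _ (div_pos (by positivity) (degree_pos hn hd))

theorem one_sub_eigenvalue_ne_zero (hn : 2 ≤ n) (hd : 1 ≤ d) : 1 - eigenvalue n d ≠ 0 :=
  sub_ne_zero.2 (eigenvalue_lt_one hn hd).ne'

def coordSum (g : Fin n → ℝ) (x : State n d) : ℝ := ∑ i, g (x i)

theorem coordSum_update (g : Fin n → ℝ) (x : State n d) (i : Fin d) (a : Fin n) :
    coordSum g (update x i a) = coordSum g x + (g a - g (x i)) := by
  simp only [coordSum, ← sum_erase_add _ _ (mem_univ i), update_self]
  rw [sum_congr rfl fun j hj => by rw [update_of_ne (ne_of_mem_erase hj)]]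
  ring

theorem sum_erase_sub {g : Fin n → ℝ} (hg : ∑ a, g a = 0) (b : Fin n) :
    ∑ a ∈ univ.erase b, (g a - g b) = -(n * g b) := by
  have := sum_erase_add _ g (mem_univ b)
  rw [sum_sub_distrib, sum_const, card_erase_of_mem (mem_univ b), card_univ, Fintype.card_fin,
    nsmul_eq_mul]
  rcases Nat.eq_zero_or_pos n with rfl | hn
  · exact b.elim0
  · rw [Nat.cast_sub hn]
    push_cast
    linarith

theorem mulVec_P_coordSum (hn : 2 ≤ n) (hd : 1 ≤ d) {g : Fin n → ℝ} (hg : ∑ a, g a = 0) :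
    P n d *ᵥ coordSum g = eigenvalue n d • coordSum (d := d) g := funext fun x => by
  have hn1 : (n : ℝ) - 1 ≠ 0 := by
    have : (2 : ℝ) ≤ n := by exact_mod_cast hn
    linarith
  have hd0 : (d : ℝ) ≠ 0 := by positivity
  simp only [mulVec_P_apply, coordSum_update, sum_add_distrib, sum_erase_sub hg, sum_const,
    card_erase_of_mem (mem_univ _), card_univ, Fintype.card_fin, nsmul_eq_mul,
    Nat.cast_sub (by omega : 1 ≤ n), Nat.cast_one, Pi.smul_apply, smul_eq_mul, eigenvalue]
  rw [sum_neg_distrib, ← mul_sum, show ∑ i, g (x i) = coordSum g x from rfl]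
  field_simp
  ring

def centeredIndicator (a₀ : Fin n) (a : Fin n) : ℝ := (if a = a₀ then 1 else 0) - 1 / n

theorem sum_centeredIndicator (a₀ : Fin n) : ∑ a, centeredIndicator a₀ a = 0 := by
  have : (n : ℝ) ≠ 0 := by exact_mod_cast (Fin.pos a₀).ne'
  simp [centeredIndicator, sum_sub_distrib, this]

theorem sum_erase_centeredIndicator_sub_sq (a₀ b : Fin n) :
    ∑ a ∈ univ.erase b, (centeredIndicator a₀ a - centeredIndicator a₀ b) ^ 2 =
      1 + (n - 2) * (centeredIndicator a₀ b + 1 / n) := by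
  simp only [centeredIndicator, sub_sub_sub_cancel_right, sub_add_cancel]
  by_cases hb : b = a₀
  · subst hb
    rw [sum_congr rfl fun a ha => by rw [if_neg (ne_of_mem_erase ha), if_pos rfl], sum_const,
      card_erase_of_mem (mem_univ _), card_univ, Fintype.card_fin, nsmul_eq_mul,
      Nat.cast_sub (Fin.pos b), if_pos rfl]
    push_cast
    ring
  · rw [sum_congr rfl fun a _ => by
        rw [if_neg hb, sub_zero, ite_pow, one_pow, zero_pow two_ne_zero],
      sum_ite_eq' _ a₀, if_pos (mem_erase.2 ⟨Ne.symm hb, mem_univ _⟩), if_neg hb]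
    ring

theorem mulVec_P_coordSum_centeredIndicator_sq (hn : 2 ≤ n) (hd : 1 ≤ d) (a₀ : Fin n)
    (x : State n d) :
    (P n d *ᵥ coordSum (centeredIndicator a₀) ^ 2) x =
      (2 * eigenvalue n d - 1) * coordSum (centeredIndicator a₀) x ^ 2 +
        (1 - eigenvalue n d) * (n - 2) / n * coordSum (centeredIndicator a₀) x + 2 / n := by
  have hn1 : (n : ℝ) - 1 ≠ 0 := by
    have : (2 : ℝ) ≤ n := by exact_mod_cast hn
    linarith
  have hn0 : (n : ℝ) ≠ 0 := by positivity
  have hd0 : (d : ℝ) ≠ 0 := by positivity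
  rw [mulVec_P_apply]
  simp only [Pi.pow_apply, coordSum_update]
  set F := coordSum (centeredIndicator a₀) x
  have hinner : ∀ b : Fin n, ∑ a ∈ univ.erase b,
      (F + (centeredIndicator a₀ a - centeredIndicator a₀ b)) ^ 2 =
        (n - 1) * F ^ 2 - 2 * n * F * centeredIndicator a₀ b +
          (1 + (n - 2) * (centeredIndicator a₀ b + 1 / n)) := fun b => by
    simp only [add_sq, sum_add_distrib, ← mul_sum, sum_erase_sub (sum_centeredIndicator a₀),
      sum_erase_centeredIndicator_sub_sq, sum_const, card_erase_of_mem (mem_univ _), card_univ,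
      Fintype.card_fin, nsmul_eq_mul, Nat.cast_sub (by omega : 1 ≤ n), Nat.cast_one]
    ring
  simp only [hinner, sum_add_distrib, sum_sub_distrib, sum_const, card_univ, Fintype.card_fin,
    nsmul_eq_mul, ← mul_sum]
  rw [show ∑ i, centeredIndicator a₀ (x i) = F from rfl, eigenvalue]
  field_simp
  ring

theorem pi_dotProduct_mulVec_P (hn : 2 ≤ n) (hd : 1 ≤ d) (φ : State n d → ℝ) :
    pi n d ⬝ᵥ (P n d *ᵥ φ) = pi n d ⬝ᵥ φ := by
  rw [dotProduct_mulVec, pi_vecMul_P hn hd]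

theorem pi_dotProduct_coordSum (hn : 2 ≤ n) (hd : 1 ≤ d) {g : Fin n → ℝ} (hg : ∑ a, g a = 0) :
    pi n d ⬝ᵥ coordSum g = 0 := by
  have h := pi_dotProduct_mulVec_P hn hd (coordSum g)
  rw [mulVec_P_coordSum hn hd hg, dotProduct_smul, smul_eq_mul] at h
  exact (mul_eq_zero.1 (by linear_combination -h : (1 - eigenvalue n d) * _ = 0)).resolve_left
    (one_sub_eigenvalue_ne_zero hn hd)

theorem pi_dotProduct_coordSum_centeredIndicator_sq (hn : 2 ≤ n) (hd : 1 ≤ d) (a₀ : Fin n) :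
    pi n d ⬝ᵥ coordSum (centeredIndicator a₀) ^ 2 = d * (n - 1) / n ^ 2 := by
  have h := pi_dotProduct_mulVec_P hn hd (coordSum (centeredIndicator a₀) ^ 2)
  have hmean := pi_dotProduct_coordSum hn hd (sum_centeredIndicator a₀)
  have hsum := sum_pi (d := d) (by omega : 1 ≤ n)
  have hexpand : pi n d ⬝ᵥ (P n d *ᵥ coordSum (centeredIndicator a₀) ^ 2) =
      (2 * eigenvalue n d - 1) * (pi n d ⬝ᵥ coordSum (centeredIndicator a₀) ^ 2) +
        (1 - eigenvalue n d) * (n - 2) / n * (pi n d ⬝ᵥ coordSum (centeredIndicator a₀)) +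
          2 / n * ∑ x, pi n d x := by
    simp only [dotProduct, mulVec_P_coordSum_centeredIndicator_sq hn hd, mul_sum,
      ← sum_add_distrib, Pi.pow_apply]
    exact sum_congr rfl fun x _ => by ring
  rw [hexpand, hmean, hsum] at h
  have hS : (pi n d ⬝ᵥ coordSum (centeredIndicator a₀) ^ 2) * (n / (d * (n - 1))) = 1 / n := by
    rw [← sub_sub_cancel (1 : ℝ) (n / _), ← eigenvalue]
    linear_combination (-1 / 2 : ℝ) * h
  have hn0 : (n : ℝ) ≠ 0 := by positivity
  have hn1 : (n : ℝ) - 1 ≠ 0 := by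
    have : (2 : ℝ) ≤ n := by exact_mod_cast hn
    linarith
  have hd0 : (d : ℝ) ≠ 0 := by positivity
  field_simp at hS ⊢
  linear_combination hS

theorem mulVec_P_coordSum_centeredIndicator_sq_le (hn : 3 ≤ n) (hd : 2 ≤ d) (a₀ : Fin n)
    (x : State n d) :
    (P n d *ᵥ coordSum (centeredIndicator a₀) ^ 2) x ≤
      eigenvalue n d ^ 2 * (coordSum (centeredIndicator a₀) ^ 2) x +
        (1 - eigenvalue n d ^ 2) * (d * (n - 1) ^ 2 / n ^ 2) := by
  have hN : (3 : ℝ) ≤ n := by exact_mod_cast hn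
  have hD : (2 : ℝ) ≤ d := by exact_mod_cast hd
  have hD0 := degree_pos (by omega : 2 ≤ n) (by omega : 1 ≤ d)
  obtain ⟨e, he_def⟩ : ∃ e, e = n / (d * (n - 1) : ℝ) := ⟨_, rfl⟩
  have hlam : eigenvalue n d = 1 - e := by rw [he_def]; rfl
  have he : e * (d * (n - 1)) = n := by rw [he_def]; exact div_mul_cancel₀ _ hD0.ne'
  have he2 : 2 * (n - 1) * e ≤ n := by
    have : 0 ≤ e := by rw [he_def]; positivity
    nlinarith
  have hV : (1 - eigenvalue n d ^ 2) * (d * (n - 1) ^ 2 / n ^ 2) = (2 - e) * (n - 1) / n := by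
    rw [hlam]
    field_simp
    linear_combination (2 - e) * (n - 1) * he
  rw [mulVec_P_coordSum_centeredIndicator_sq (by omega) (by omega), hV, hlam, Pi.pow_apply]
  generalize coordSum (centeredIndicator a₀) x = F
  -- `-n w² + (n - 2) w` is maximal at `w = (n - 2) / (2n)`; here `w = e F`
  have hquad : n * -(e * F) ^ 2 + (n - 2) * (e * F) + 2 ≤ (2 - e) * (n - 1) := by
    nlinarith [sq_nonneg (2 * n * (e * F) - (n - 2))]
  have hn0 : (n : ℝ) ≠ 0 := by positivity
  have key : (1 - e) ^ 2 * F ^ 2 + (2 - e) * (n - 1) / n -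
      ((2 * (1 - e) - 1) * F ^ 2 + (1 - (1 - e)) * (n - 2) / n * F + 2 / n) =
        ((2 - e) * (n - 1) - (n * -(e * F) ^ 2 + (n - 2) * (e * F) + 2)) / n := by
    field_simp
    ring
  rw [← sub_nonneg, key]
  exact div_nonneg (sub_nonneg.2 hquad) n.cast_nonneg

theorem coordSum_centeredIndicator_const (a₀ : Fin n) :
    coordSum (centeredIndicator a₀) (fun _ : Fin d => a₀) = d * (n - 1) / n := by
  have : (n : ℝ) ≠ 0 := by exact_mod_cast (Fin.pos a₀).ne'
  simp only [coordSum, centeredIndicator, if_true, sum_const, card_univ, Fintype.card_fin,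
    nsmul_eq_mul]
  field_simp

theorem pow_P_dotProduct_coordSum_centeredIndicator (hn : 2 ≤ n) (hd : 1 ≤ d) (a₀ : Fin n)
    (t : ℕ) :
    (P n d ^ t) (fun _ => a₀) ⬝ᵥ coordSum (centeredIndicator a₀) =
      eigenvalue n d ^ t * (d * (n - 1) / n) := by
  rw [← coordSum_centeredIndicator_const a₀, ← smul_eq_mul, ← Pi.smul_apply,
    ← pow_mulVec_eq_of_mulVec_eq (mulVec_P_coordSum hn hd (sum_centeredIndicator a₀)) t]
  rfl

theorem pow_P_dotProduct_coordSum_centeredIndicator_sq_le (hn : 3 ≤ n) (hd : 2 ≤ d)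
    (a₀ : Fin n) (t : ℕ) :
    (P n d ^ t) (fun _ => a₀) ⬝ᵥ coordSum (centeredIndicator a₀) ^ 2 ≤
      (eigenvalue n d ^ 2) ^ t * (d * (n - 1) / n) ^ 2 +
        (1 - (eigenvalue n d ^ 2) ^ t) * (d * (n - 1) ^ 2 / n ^ 2) := by
  rw [← coordSum_centeredIndicator_const a₀]
  exact pow_mulVec_le_of_mulVec_le (P_mem_rowStochastic (by omega) (by omega)) (sq_nonneg _) (mulVec_P_coordSum_centeredIndicator_sq_le hn hd a₀) t _

theorem eigenvalue_sq_pow_le (hn : 3 ≤ n) (hd : 2 ≤ d) (a₀ : Fin n) {ε : ℝ} (hε : ε < 1)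
    {t : ℕ} (ht : tv ((P n d ^ t) fun _ => a₀) (pi n d) ≤ ε) :
    (eigenvalue n d ^ 2) ^ t ≤ 2 * n / (d * (n - 1)) * (ε / (1 - ε)) := by
  have hN : (3 : ℝ) ≤ n := by exact_mod_cast hn
  have hPt := pow_mem (P_mem_doublyStochastic (by omega : 2 ≤ n) (by omega : 1 ≤ d)) t
  have hwilson := sq_dotProduct_sub_mul_le_of_tv_le
    (fun _ => nonneg_of_mem_doublyStochastic hPt) pi_nonneg
    (sum_row_of_mem_doublyStochastic hPt _) (sum_pi (by omega)) ht (coordSum (centeredIndicator a₀))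
  rw [pow_P_dotProduct_coordSum_centeredIndicator (by omega) (by omega),
    pi_dotProduct_coordSum (by omega) (by omega) (sum_centeredIndicator a₀),
    pi_dotProduct_coordSum_centeredIndicator_sq (by omega) (by omega)] at hwilson
  have hF : (0 : ℝ) < d * (n - 1) / n := div_pos (degree_pos (by omega) (by omega)) (by linarith)
  have hε0 : 0 ≤ ε := (tv_nonneg _ _).trans ht
  have hVF : (d : ℝ) * (n - 1) ^ 2 / n ^ 2 + d * (n - 1) / n ^ 2 = d * (n - 1) / n := by
    field_simp
    ring
  have hLV : 0 ≤ (eigenvalue n d ^ 2) ^ t * (d * (n - 1) ^ 2 / n ^ 2) := by positivity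
  have hmain : (eigenvalue n d ^ 2) ^ t * (d * (n - 1) / n) ^ 2 * (1 - ε) ≤
      2 * ε * (d * (n - 1) / n) := by
    rw [sub_zero, mul_pow, ← pow_mul, zero_pow two_ne_zero, sub_zero, mul_comm t, pow_mul]
      at hwilson
    refine hwilson.trans (mul_le_mul_of_nonneg_left ?_ (by positivity))
    linear_combination pow_P_dotProduct_coordSum_centeredIndicator_sq_le hn hd a₀ t + hLV + hVF
  rw [show 2 * n / (d * (n - 1)) * (ε / (1 - ε)) = 2 * ε / (d * (n - 1) / n * (1 - ε)) by
      field_simp, le_div_iff₀ (mul_pos hF (by linarith))]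
  exact le_of_mul_le_mul_right (by linear_combination hmain) hF

end RW

theorem Real.log_inv_div_log_inv_le_of_pow_le {r B : ℝ} {T : ℕ} (hr0 : 0 < r) (hr1 : r < 1)
    (h : r ^ T ≤ B) : Real.log B⁻¹ / Real.log r⁻¹ ≤ T := by
  have hlog := Real.log_le_log (pow_pos hr0 T) h
  rw [Real.log_pow] at hlog
  rw [Real.log_inv, Real.log_inv, div_le_iff₀ (neg_pos.2 (Real.log_neg hr0 hr1))]
  linarith

/-- Wilson-type lower bound on the mixing time of the Rook's Walk. -/
theorem rook_walk_mixing_lower_bound (n d : ℕ) (hn : 3 ≤ n) (hd : 2 ≤ d)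
    (ε : ℝ) (hε0 : 0 < ε) (hε1 : ε < 1) :
    (RW.tmix n d ε : ℝ) ≥
      (Real.log ((d : ℝ) * ((n : ℝ) - 1) / (2 * (n : ℝ))) + Real.log ((1 - ε) / ε)) /
        (2 * Real.log ((d : ℝ) * ((n : ℝ) - 1) / ((d : ℝ) * ((n : ℝ) - 1) - (n : ℝ)))) := by
  have hN : (3 : ℝ) ≤ n := by exact_mod_cast hn
  have hD := RW.degree_pos (by omega : 2 ≤ n) (by omega : 1 ≤ d)
  have hT : RW.dist n d (RW.tmix n d ε) ≤ ε := Nat.sInf_mem (RW.exists_dist_le hn (by omega) hε0)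
  have hlam := RW.eigenvalue_pos hn hd
  have hbound := Real.log_inv_div_log_inv_le_of_pow_le (pow_pos hlam 2)
    (pow_lt_one₀ hlam.le (RW.eigenvalue_lt_one (by omega) (by omega)) two_ne_zero)
    (RW.eigenvalue_sq_pow_le hn hd ⟨0, by omega⟩ hε1 ((RW.tv_le_dist _ _).trans hT))
  convert hbound using 2
  · rw [mul_inv, inv_div, inv_div,
      Real.log_mul (div_pos hD (by linarith)).ne' (div_pos (by linarith) hε0).ne']
  · rw [RW.eigenvalue_eq (by omega) (by omega), ← inv_pow, inv_div, Real.log_pow]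
    norm_num
end
end

section
/- Let y ∈ Ω = {1,…,n}^d have Hamming distance x from 1̂ = (1,…,1). Then for the Rook's Walk transition matrix P: the total probability of moving from y into shell H_{x−1} is Σ_{z ∈ H_{x−1}} P(y,z) = x/(d(n−1)); the total probability of staying in shell H_x is Σ_{z ∈ H_x} P(y,z) = x(n−2)/(d(n−1)); and the total probability of moving into shell H_{x+1} is Σ_{z ∈ H_{x+1}} P(y,z) = (d−x)/d. -/
open Finset

noncomputable section

/-- The Hamming shell at distance `i ∈ ℕ` from the base point `b`. -/
def RW.shell (n d : ℕ) (b : RW.State n d) (i : ℕ) : Finset (RW.State n d) :=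
  Finset.univ.filter fun x => hammingDist b x = i

/-- The Hamming shell at (integer) distance `i` from the base point `b`
(so shells with negative index, or index exceeding `d`, are empty). -/
def RW.shellZ (n d : ℕ) (b : RW.State n d) (i : ℤ) : Finset (RW.State n d) :=
  Finset.univ.filter fun x => (hammingDist b x : ℤ) = i


open Function

namespace RWAux

variable {n d : ℕ}

lemma hamming_update {y : Fin d → Fin n} {i : Fin d} {v : Fin n} (hv : v ≠ y i) :
    hammingDist y (Function.update y i v) = 1 := by
  have : ({j | y j ≠ Function.update y i v j} : Finset (Fin d)) = {i} := by
    ext j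
    simp only [mem_filter, mem_univ, true_and, mem_singleton, Function.update_apply]
    rcases eq_or_ne j i with rfl | h
    · simp [Ne.symm hv]
    · simp [h]
  rw [hammingDist, this, card_singleton]

lemma neighbor_exists {y z : Fin d → Fin n} (h : hammingDist y z = 1) :
    ∃ i, z i ≠ y i ∧ z = Function.update y i (z i) := by
  rw [hammingDist, card_eq_one] at h
  obtain ⟨i0, hi⟩ := h
  have hne : y i0 ≠ z i0 := by
    have : i0 ∈ ({j | y j ≠ z j} : Finset (Fin d)) := by rw [hi]; exact mem_singleton_self i0
    simpa using this
  have hmem : ∀ j, y j ≠ z j → j = i0 := by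
    intro j hj
    have : j ∈ ({j | y j ≠ z j} : Finset (Fin d)) := by simpa using hj
    rw [hi] at this; simpa using this
  refine ⟨i0, Ne.symm hne, funext fun j => ?_⟩
  rcases eq_or_ne j i0 with rfl | hj
  · simp
  · rw [Function.update_of_ne hj]
    by_contra hzy
    exact hj (hmem j (Ne.symm hzy))

lemma dist_update_int (b y : Fin d → Fin n) {i : Fin d} {v : Fin n} (hv : v ≠ y i) :
    (hammingDist b (Function.update y i v) : ℤ) =
      (hammingDist b y : ℤ) + (if b i = y i then 0 else -1) + (if b i = v then 0 else 1) := by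
  have hfil : ({j | b j ≠ Function.update y i v j} : Finset (Fin d))
      = if b i = v then ({j | b j ≠ y j} : Finset (Fin d)).erase i
        else insert i (({j | b j ≠ y j} : Finset (Fin d)).erase i) := by
    split_ifs with h
    · ext j
      rcases eq_or_ne j i with rfl | hj
      · simp [Function.update_apply, h]
      · simp [Function.update_apply, hj]
    · ext j
      rcases eq_or_ne j i with rfl | hj
      · simp [Function.update_apply, h]
      · simp [Function.update_apply, hj]
  rw [hammingDist, hammingDist, hfil]
  split_ifs with h1 h2 h2
  · -- b i = v, b i = y i : impossible since v ≠ y i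
    exact absurd (h1.symm.trans h2) hv
  · -- b i = v, b i ≠ y i : i ∈ F, card erase = card - 1
    have hiF : i ∈ ({j | b j ≠ y j} : Finset (Fin d)) := by simpa using h2
    have := card_erase_of_mem hiF
    have hpos : 1 ≤ ({j | b j ≠ y j} : Finset (Fin d)).card := card_pos.mpr ⟨i, hiF⟩
    omega
  · -- b i ≠ v, b i = y i : i ∉ F
    have hiF : i ∉ ({j | b j ≠ y j} : Finset (Fin d)) := by simpa using h2
    rw [erase_eq_of_notMem hiF, card_insert_of_notMem (by simp [hiF])]
    push_cast; ring
  · -- b i ≠ v, b i ≠ y i : i ∈ F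
    have hiF : i ∈ ({j | b j ≠ y j} : Finset (Fin d)) := by simpa using h2
    rw [card_insert_of_notMem (notMem_erase _ _), card_erase_of_mem hiF]
    have hpos : 1 ≤ ({j | b j ≠ y j} : Finset (Fin d)).card := card_pos.mpr ⟨i, hiF⟩
    omega

end RWAux

namespace RWAux2
open RWAux

variable {n d : ℕ}

lemma card_down (b y : Fin d → Fin n) :
    ({z | (hammingDist b z : ℤ) = (hammingDist b y : ℤ) - 1 ∧ hammingDist y z = 1} :
      Finset (Fin d → Fin n)).card = hammingDist b y := by
  have hs : hammingDist b y = #({i | b i ≠ y i} : Finset (Fin d)) := rfl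
  conv_rhs => rw [hs]
  symm
  apply card_bij (fun i _ => Function.update y i (b i))
  · intro i hi
    have hne : b i ≠ y i := by simpa using hi
    simp only [mem_filter, mem_univ, true_and]
    refine ⟨?_, hamming_update hne⟩
    rw [dist_update_int b y hne, if_neg hne, if_pos rfl]
    ring
  · intro i1 h1 i2 h2 e
    by_contra hne
    have hb1 : b i1 ≠ y i1 := by simpa using h1
    have := congrFun e i1
    rw [Function.update_self, Function.update_of_ne hne] at this
    exact hb1 this
  · intro z hz
    simp only [mem_filter, mem_univ, true_and] at hz
    obtain ⟨hdist, hnbr⟩ := hz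
    obtain ⟨i, hzi, hz_eq⟩ := neighbor_exists hnbr
    rw [hz_eq, dist_update_int b y hzi] at hdist
    split_ifs at hdist with h1 h2 h2
    · omega
    · omega
    · -- b i ≠ y i, b i = z i : good case
      refine ⟨i, by simpa using h1, ?_⟩
      rw [h2]; exact hz_eq.symm
    · omega

lemma card_same (b y : Fin d → Fin n) (hn : 3 ≤ n) :
    ({z | (hammingDist b z : ℤ) = (hammingDist b y : ℤ) ∧ hammingDist y z = 1} :
      Finset (Fin d → Fin n)).card = hammingDist b y * (n - 2) := by
  have hcard : (({i | b i ≠ y i} : Finset (Fin d)).sigma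
      (fun i => (univ \ {b i, y i} : Finset (Fin n)))).card
      = hammingDist b y * (n - 2) := by
    rw [card_sigma, hammingDist]
    rw [Finset.sum_congr rfl (fun i hi => ?_), sum_const, smul_eq_mul]
    have hne : b i ≠ y i := by simpa using hi
    rw [card_sdiff_of_subset (subset_univ _), card_univ, Fintype.card_fin, card_pair hne]
  rw [← hcard]
  symm
  apply card_bij (fun a _ => Function.update y a.1 a.2)
  · rintro ⟨i, v⟩ ha
    simp only [mem_sigma, mem_filter, mem_univ, true_and, mem_sdiff, mem_insert,
      mem_singleton, not_or] at ha
    obtain ⟨hbi, hvb, hvy⟩ := ha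
    simp only [mem_filter, mem_univ, true_and]
    refine ⟨?_, hamming_update hvy⟩
    rw [dist_update_int b y hvy, if_neg hbi, if_neg (fun h => hvb h.symm)]
    ring
  · rintro ⟨i1, v1⟩ h1 ⟨i2, v2⟩ h2 e
    simp only [mem_sigma, mem_filter, mem_univ, true_and, mem_sdiff, mem_insert,
      mem_singleton, not_or] at h1 h2
    have hi : i1 = i2 := by
      by_contra hne
      have := congrFun e i1
      rw [Function.update_self, Function.update_of_ne hne] at this
      exact h1.2.2 this
    subst hi
    have hv : v1 = v2 := by
      have := congrFun e i1
      rwa [Function.update_self, Function.update_self] at this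
    rw [hv]
  · intro z hz
    simp only [mem_filter, mem_univ, true_and] at hz
    obtain ⟨hdist, hnbr⟩ := hz
    obtain ⟨i, hzi, hz_eq⟩ := neighbor_exists hnbr
    rw [hz_eq, dist_update_int b y hzi] at hdist
    split_ifs at hdist with h1 h2 h2
    · exact absurd (h1.symm.trans h2) (Ne.symm hzi)
    · omega
    · omega
    · refine ⟨⟨i, z i⟩, ?_, hz_eq.symm⟩
      simp only [mem_sigma, mem_filter, mem_univ, true_and, mem_sdiff, mem_insert,
        mem_singleton, not_or]
      exact ⟨h1, Ne.symm h2, hzi⟩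

lemma card_up (b y : Fin d → Fin n) :
    ({z | (hammingDist b z : ℤ) = (hammingDist b y : ℤ) + 1 ∧ hammingDist y z = 1} :
      Finset (Fin d → Fin n)).card = ({i | b i = y i} : Finset (Fin d)).card * (n - 1) := by
  have hcard : (({i | b i = y i} : Finset (Fin d)).sigma
      (fun i => (univ \ {y i} : Finset (Fin n)))).card
      = ({i | b i = y i} : Finset (Fin d)).card * (n - 1) := by
    rw [card_sigma]
    rw [Finset.sum_congr rfl (fun i hi => ?_), sum_const, smul_eq_mul]
    rw [card_sdiff_of_subset (subset_univ _), card_univ, Fintype.card_fin, card_singleton]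
  rw [← hcard]
  symm
  apply card_bij (fun a _ => Function.update y a.1 a.2)
  · rintro ⟨i, v⟩ ha
    simp only [mem_sigma, mem_filter, mem_univ, true_and, mem_sdiff, mem_singleton] at ha
    obtain ⟨hbi, hvy⟩ := ha
    simp only [mem_filter, mem_univ, true_and]
    refine ⟨?_, hamming_update hvy⟩
    have hbv : b i ≠ v := fun h => hvy (h.symm.trans hbi)
    rw [dist_update_int b y hvy, if_pos hbi, if_neg hbv]
    ring
  · rintro ⟨i1, v1⟩ h1 ⟨i2, v2⟩ h2 e
    simp only [mem_sigma, mem_filter, mem_univ, true_and, mem_sdiff, mem_singleton] at h1 h2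
    have hi : i1 = i2 := by
      by_contra hne
      have := congrFun e i1
      rw [Function.update_self, Function.update_of_ne hne] at this
      exact h1.2 this
    subst hi
    have hv : v1 = v2 := by
      have := congrFun e i1
      rwa [Function.update_self, Function.update_self] at this
    rw [hv]
  · intro z hz
    simp only [mem_filter, mem_univ, true_and] at hz
    obtain ⟨hdist, hnbr⟩ := hz
    obtain ⟨i, hzi, hz_eq⟩ := neighbor_exists hnbr
    rw [hz_eq, dist_update_int b y hzi] at hdist
    split_ifs at hdist with h1 h2 h2
    · omega
    · refine ⟨⟨i, z i⟩, ?_, hz_eq.symm⟩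
      simp only [mem_sigma, mem_filter, mem_univ, true_and, mem_sdiff, mem_singleton]
      exact ⟨h1, hzi⟩
    · omega
    · omega

end RWAux2

namespace RWAux3

lemma sum_P_eq (n d : ℕ) (b y : RW.State n d) (k : ℤ) :
    ∑ z ∈ RW.shellZ n d b k, RW.P n d y z =
      (({z | (hammingDist b z : ℤ) = k ∧ hammingDist y z = 1} :
          Finset (RW.State n d)).card : ℝ) * (1 / ((d : ℝ) * ((n : ℝ) - 1))) := by
  rw [RW.shellZ]
  simp only [RW.P, Matrix.of_apply]
  rw [Finset.sum_ite, Finset.sum_const, Finset.sum_const_zero, add_zero, Finset.filter_filter,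
    nsmul_eq_mul]

lemma main (n d : ℕ) (hn : 3 ≤ n) (hd : 2 ≤ d)
    (x : ℕ) (hx : x ≤ d) (b y : RW.State n d)
    (hy : hammingDist b y = x) :
    (∑ z ∈ RW.shellZ n d b ((x : ℤ) - 1),
        RW.P n d y z = (x : ℝ) / ((d : ℝ) * ((n : ℝ) - 1))) ∧
    (∑ z ∈ RW.shellZ n d b (x : ℤ),
        RW.P n d y z = (x : ℝ) * ((n : ℝ) - 2) / ((d : ℝ) * ((n : ℝ) - 1))) ∧
    (∑ z ∈ RW.shellZ n d b ((x : ℤ) + 1),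
        RW.P n d y z = ((d : ℝ) - (x : ℝ)) / (d : ℝ)) := by
  subst hy
  have hn1 : ((n : ℝ) - 1) ≠ 0 := by
    have : (3 : ℝ) ≤ (n : ℝ) := by exact_mod_cast hn
    intro h; linarith
  have hd0 : (d : ℝ) ≠ 0 := Nat.cast_ne_zero.mpr (by omega)
  refine ⟨?_, ?_, ?_⟩
  · rw [sum_P_eq, RWAux2.card_down b y, mul_one_div]
  · rw [sum_P_eq, RWAux2.card_same b y hn, Nat.cast_mul,
      Nat.cast_sub (show 2 ≤ n by omega)]
    push_cast
    ring
  · rw [sum_P_eq, RWAux2.card_up b y]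
    have hs : hammingDist b y = #({i | ¬ b i = y i} : Finset (Fin d)) := rfl
    have hc := Finset.card_filter_add_card_filter_not
      (s := (univ : Finset (Fin d))) (p := fun i => b i = y i)
    rw [card_univ, Fintype.card_fin] at hc
    have hcn : #({i | b i = y i} : Finset (Fin d)) = d - hammingDist b y := by omega
    rw [Nat.cast_mul, hcn, Nat.cast_sub hx, Nat.cast_sub (show 1 ≤ n by omega)]
    push_cast
    field_simp

end RWAux3

/-- One-step shell-transition probabilities of the Rook's Walk: from a state `y` in
Hamming shell `x` (relative to `1̂ = (1,…,1)`), the total probability of moving to shell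
`x-1` is `x/(d(n-1))`, of staying in shell `x` is `x(n-2)/(d(n-1))`, and of moving to
shell `x+1` is `(d-x)/d`. -/
theorem rook_walk_shell_transition (n d : ℕ) (hn : 3 ≤ n) (hd : 2 ≤ d)
    (x : ℕ) (hx : x ≤ d) (y : RW.State n d)
    (hy : hammingDist (fun _ => (⟨0, by omega⟩ : Fin n)) y = x) :
    (∑ z ∈ RW.shellZ n d (fun _ => (⟨0, by omega⟩ : Fin n)) ((x : ℤ) - 1),
        RW.P n d y z = (x : ℝ) / ((d : ℝ) * ((n : ℝ) - 1))) ∧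
    (∑ z ∈ RW.shellZ n d (fun _ => (⟨0, by omega⟩ : Fin n)) (x : ℤ),
        RW.P n d y z = (x : ℝ) * ((n : ℝ) - 2) / ((d : ℝ) * ((n : ℝ) - 1))) ∧
    (∑ z ∈ RW.shellZ n d (fun _ => (⟨0, by omega⟩ : Fin n)) ((x : ℤ) + 1),
        RW.P n d y z = ((d : ℝ) - (x : ℝ)) / (d : ℝ)) := by
  exact RWAux3.main n d hn hd x hx _ y hy
end
end

section
/- The probability distribution π* on {0,…,d} defined by π*(x) = C(d,x)·(n−1)^x·n^{−d} is a stationary distribution for the RWBD transition matrix P*: it satisfies Σ_{x=0}^d π*(x)·P*(x,y) = π*(y) for all y ∈ {0,…,d}. -/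
open Finset

noncomputable section

/-- The transition matrix of the Rook's Walk Birth-Death (RWBD) chain on `{0,…,d}`. -/
def BD.P (n d : ℕ) : Matrix (Fin (d + 1)) (Fin (d + 1)) ℝ :=
  Matrix.of fun x y =>
    if (y : ℕ) + 1 = (x : ℕ) then (x : ℝ) / ((d : ℝ) * ((n : ℝ) - 1))
    else if (y : ℕ) = (x : ℕ) then (x : ℝ) * ((n : ℝ) - 2) / ((d : ℝ) * ((n : ℝ) - 1))
    else if (y : ℕ) = (x : ℕ) + 1 then ((d : ℝ) - (x : ℝ)) / (d : ℝ)
    else 0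

/-- The stationary distribution of the RWBD chain: `π*(x) = C(d,x)(n-1)^x n^{-d}`. -/
def BD.pi (n d : ℕ) : Fin (d + 1) → ℝ :=
  fun x => (d.choose (x : ℕ) : ℝ) * ((n : ℝ) - 1) ^ (x : ℕ) / (n : ℝ) ^ d

/-- Worst-case total variation distance to stationarity of the RWBD chain at time `t`. -/
def BD.dist (n d : ℕ) (t : ℕ) : ℝ :=
  ⨆ x : Fin (d + 1), tv ((BD.P n d ^ t) x) (BD.pi n d)

/-- The mixing time of the RWBD chain. -/
def BD.tmix (n d : ℕ) (ε : ℝ) : ℕ := sInf {t : ℕ | BD.dist n d t ≤ ε}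

lemma BD.P_down (n d : ℕ) (x y : Fin (d + 1)) (h : (y : ℕ) + 1 = (x : ℕ)) :
    BD.P n d x y = (x : ℝ) / ((d : ℝ) * ((n : ℝ) - 1)) := by
  simp only [BD.P, Matrix.of_apply]; rw [if_pos h]

lemma BD.P_stay (n d : ℕ) (x y : Fin (d + 1)) (h : (y : ℕ) = (x : ℕ)) :
    BD.P n d x y = (x : ℝ) * ((n : ℝ) - 2) / ((d : ℝ) * ((n : ℝ) - 1)) := by
  simp only [BD.P, Matrix.of_apply]; rw [if_neg (by omega), if_pos h]

lemma BD.P_up (n d : ℕ) (x y : Fin (d + 1)) (h : (y : ℕ) = (x : ℕ) + 1) :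
    BD.P n d x y = ((d : ℝ) - (x : ℝ)) / (d : ℝ) := by
  simp only [BD.P, Matrix.of_apply]; rw [if_neg (by omega), if_neg (by omega), if_pos h]

lemma BD.P_zero (n d : ℕ) (x y : Fin (d + 1)) (h1 : (y : ℕ) + 1 ≠ (x : ℕ))
    (h2 : (y : ℕ) ≠ (x : ℕ)) (h3 : (y : ℕ) ≠ (x : ℕ) + 1) : BD.P n d x y = 0 := by
  simp only [BD.P, Matrix.of_apply]; rw [if_neg h1, if_neg h2, if_neg h3]

set_option maxHeartbeats 1600000 in
/-- `π*(x) = C(d,x)(n-1)^x n^{-d}` is a stationary distribution of the RWBD chain. -/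
theorem rwbd_stationary (n d : ℕ) (hn : 3 ≤ n) (hd : 2 ≤ d) (y : Fin (d + 1)) :
    ∑ x : Fin (d + 1), BD.pi n d x * BD.P n d x y = BD.pi n d y := by
  have hn3 : (3 : ℝ) ≤ (n : ℝ) := by exact_mod_cast hn
  have hd2 : (2 : ℝ) ≤ (d : ℝ) := by exact_mod_cast hd
  have hn1 : (n : ℝ) - 1 ≠ 0 := by linarith
  have hn0 : (n : ℝ) ≠ 0 := by linarith
  have hd0 : (d : ℝ) ≠ 0 := by linarith
  have hjd : (y : ℕ) ≤ d := by omega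
  rcases Nat.eq_zero_or_pos (y : ℕ) with hj0 | hj1
  · -- y = 0, relevant states are 0 and 1
    set s : Finset (Fin (d + 1)) := {⟨0, by omega⟩, ⟨1, by omega⟩} with hs
    have hz : ∀ x ∈ Finset.univ, x ∉ s → BD.pi n d x * BD.P n d x y = 0 := by
      intro x _ hx
      simp only [hs, Finset.mem_insert, Finset.mem_singleton, Fin.ext_iff] at hx
      push_neg at hx
      rw [BD.P_zero n d x y (by omega) (by omega) (by omega), mul_zero]
    rw [← Finset.sum_subset (Finset.subset_univ s) hz, hs,
      Finset.sum_pair (by simp [Fin.ext_iff])]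
    rw [BD.P_stay n d _ y (by simp [hj0]), BD.P_down n d _ y (by simp [hj0])]
    simp only [BD.pi, hj0]
    norm_num [Nat.choose_one_right]
    field_simp
  · obtain ⟨i, hji⟩ : ∃ i, (y : ℕ) = i + 1 := ⟨(y : ℕ) - 1, by omega⟩
    have hid : i ≤ d := by omega
    have h1 : ((d.choose (i + 1)) : ℝ) * ((i : ℝ) + 1) =
        ((d.choose i) : ℝ) * ((d : ℝ) - (i : ℝ)) := by
      have h := Nat.choose_succ_right_eq d i
      zify [hid] at h
      exact_mod_cast h
    rcases eq_or_lt_of_le hjd with hjtop | hjlt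
    · -- y = d : relevant states are i = d-1 and i+1 = d
      have hi1d : i + 1 = d := by omega
      set a : Fin (d + 1) := ⟨i, by omega⟩ with ha
      set b : Fin (d + 1) := ⟨i + 1, by omega⟩ with hb
      set s : Finset (Fin (d + 1)) := {a, b} with hs
      have hz : ∀ x ∈ Finset.univ, x ∉ s → BD.pi n d x * BD.P n d x y = 0 := by
        intro x _ hx
        simp only [hs, ha, hb, Finset.mem_insert, Finset.mem_singleton, Fin.ext_iff] at hx
        push_neg at hx
        rw [BD.P_zero n d x y (by omega) (by omega) (by omega), mul_zero]
      rw [← Finset.sum_subset (Finset.subset_univ s) hz, hs,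
        Finset.sum_pair (by simp [ha, hb, Fin.ext_iff])]
      rw [BD.P_up n d a y (by simp [ha, hji]), BD.P_stay n d b y (by simp [hb, hji])]
      simp only [BD.pi, ha, hb, hji]
      have hc1 : d.choose (i + 1) = 1 := by rw [hi1d, Nat.choose_self]
      have hc0 : d.choose i = d := by
        rw [← hi1d, Nat.choose_succ_self_right]
      have hcast : (d : ℝ) = (i : ℝ) + 1 := by exact_mod_cast hi1d.symm
      have hpow : ((n : ℝ) - 1) ^ (i + 1) = ((n : ℝ) - 1) ^ i * ((n : ℝ) - 1) := pow_succ _ _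
      rw [hc1, hc0, hpow]
      push_cast
      rw [hcast]
      have hi0 : (i : ℝ) + 1 ≠ 0 := by positivity
      field_simp
      ring
    · -- 1 ≤ y ≤ d - 1 : relevant states are i, i+1, i+2
      have hi2d : i + 2 ≤ d := by omega
      have h2 : ((d.choose (i + 2)) : ℝ) * ((i : ℝ) + 2) =
          ((d.choose (i + 1)) : ℝ) * ((d : ℝ) - (i : ℝ) - 1) := by
        have h := Nat.choose_succ_right_eq d (i + 1)
        have e : i + 1 + 1 = i + 2 := by omega
        rw [e] at h
        have hR := congrArg (Nat.cast : ℕ → ℝ) h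
        push_cast [Nat.cast_sub (show i + 1 ≤ d by omega)] at hR
        linear_combination hR
      set a : Fin (d + 1) := ⟨i, by omega⟩ with ha
      set b : Fin (d + 1) := ⟨i + 1, by omega⟩ with hb
      set c : Fin (d + 1) := ⟨i + 2, by omega⟩ with hc
      set s : Finset (Fin (d + 1)) := {a, b, c} with hs
      have hz : ∀ x ∈ Finset.univ, x ∉ s → BD.pi n d x * BD.P n d x y = 0 := by
        intro x _ hx
        simp only [hs, ha, hb, hc, Finset.mem_insert, Finset.mem_singleton, Fin.ext_iff] at hx
        push_neg at hx
        rw [BD.P_zero n d x y (by omega) (by omega) (by omega), mul_zero]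
      rw [← Finset.sum_subset (Finset.subset_univ s) hz, hs,
        Finset.sum_insert (by simp [ha, hb, hc, Fin.ext_iff]),
        Finset.sum_pair (by simp [hb, hc, Fin.ext_iff])]
      rw [BD.P_up n d a y (by simp [ha, hji]), BD.P_stay n d b y (by simp [hb, hji]),
        BD.P_down n d c y (by simp [hc, hji])]
      simp only [BD.pi, ha, hb, hc, hji]
      have hdi : (d : ℝ) - (i : ℝ) ≠ 0 := by
        have : (i : ℝ) + 2 ≤ (d : ℝ) := by exact_mod_cast hi2d
        linarith
      have hi2 : (i : ℝ) + 2 ≠ 0 := by positivity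
      have hc0 : ((d.choose i) : ℝ) =
          ((d.choose (i + 1)) : ℝ) * ((i : ℝ) + 1) / ((d : ℝ) - (i : ℝ)) := by
        rw [eq_div_iff hdi]; linear_combination -h1
      have hc2 : ((d.choose (i + 2)) : ℝ) =
          ((d.choose (i + 1)) : ℝ) * ((d : ℝ) - (i : ℝ) - 1) / ((i : ℝ) + 2) := by
        rw [eq_div_iff hi2]; linear_combination h2
      have hp1 : ((n : ℝ) - 1) ^ (i + 1) = ((n : ℝ) - 1) ^ i * ((n : ℝ) - 1) := pow_succ _ _
      have hp2 : ((n : ℝ) - 1) ^ (i + 2) = ((n : ℝ) - 1) ^ i * ((n : ℝ) - 1) ^ 2 := by ring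
      rw [hc0, hc2, hp1, hp2]
      push_cast
      field_simp
      ring
end
end

section
/- For every n ≥ 3, d ≥ 2, every state x ∈ {0,…,d}, and every time t ≥ 0, the total variation distance of the RWBD chain started at x from its stationary distribution equals the total variation distance of the Rook's Walk started from the uniform distribution μ_x on the Hamming shell H_x from its stationary distribution: ‖P*^t(x,·) − π*‖_TV = ‖μ_x P^t − π‖_TV, where (μ_x P^t)(z) = Σ_{w∈Ω} μ_x(w) P^t(w,z). -/
open Finset

noncomputable section

/-- The uniform distribution on the `i`-th Hamming shell relative to base point `b`. -/
def RW.mu (n d : ℕ) (b : RW.State n d) (i : ℕ) : RW.State n d → ℝ :=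
  fun z => if hammingDist b z = i then 1 / ((RW.shell n d b i).card : ℝ) else 0

/-!
The Hamming distance to `1̂` lumps the Rook's Walk onto the RWBD chain: from a state at distance
`j`, a rook move leads to distance `j + 1` in `(d - j)(n - 1)` ways, to `j - 1` in `j` ways and
stays at distance `j` in `j(n - 2)` ways. As the Rook's Walk is symmetric, the lumped chain is
reversible with respect to the shell sizes `|H_j| = C(d,j)(n-1)^j`, and therefore a distribution
that is uniform on every shell stays so: started from `μ_x`, the walk has at time `t` the law
`z ↦ P*^t(x, |z|) / |H_{|z|}|`. The uniform law `π` has the same shape with `π*` in place of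
`P*^t(x, ·)`, and the total variation distance between two shell-uniform laws is that of their
shell marginals.
-/

namespace Matrix

variable {α β R : Type*} [Fintype α] [DecidableEq β]

/-- Dynkin's criterion for `P` to be lumpable along `f`, with lumped chain `Q`. -/
def IsLumping [AddCommMonoid R] (f : α → β) (P : Matrix α α R) (Q : Matrix β β R) : Prop :=
  ∀ a j, ∑ a' with f a' = j, P a a' = Q (f a) j

theorem IsLumping.card_mul_apply_comm [CommSemiring R] {f : α → β} {P : Matrix α α R}
    {Q : Matrix β β R} (h : IsLumping f P Q) (hP : P.IsSymm) (i j : β) :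
    (#{a | f a = i} : R) * Q i j = #{a | f a = j} * Q j i := by
  have key : ∀ i j, (#{a | f a = i} : R) * Q i j =
      ∑ a with f a = i, ∑ a' with f a' = j, P a a' := fun i j => by
    rw [← nsmul_eq_mul, ← sum_const]
    exact sum_congr rfl fun a ha => by rw [h, (mem_filter.1 ha).2]
  rw [key, key]
  exact sum_comm.trans (sum_congr rfl fun a _ => sum_congr rfl fun a' _ => hP.apply a a')

end Matrix

open Matrix

section UniformLift

variable {α β R : Type*} [Fintype α] [DecidableEq β]

def uniformLift [DivisionRing R] (f : α → β) (q : β → R) : α → R :=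
  fun a => q (f a) / #{a' | f a' = f a}

theorem Function.Surjective.card_fiber_ne_zero [AddMonoidWithOne R] [CharZero R] {f : α → β}
    (hf : Function.Surjective f) (j : β) : (#{a | f a = j} : R) ≠ 0 := by
  obtain ⟨a, rfl⟩ := hf j
  exact Nat.cast_ne_zero.2 (card_ne_zero_of_mem (mem_filter.2 ⟨mem_univ a, rfl⟩))

variable [Fintype β] {f : α → β}

theorem Matrix.IsLumping.uniformLift_vecMul [Field R] [CharZero R] {P : Matrix α α R}
    {Q : Matrix β β R} (h : IsLumping f P Q) (hP : P.IsSymm) (hf : Function.Surjective f)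
    (q : β → R) :
    uniformLift f q ᵥ* P = uniformLift f (q ᵥ* Q) := by
  ext z
  simp only [vecMul, dotProduct, uniformLift, sum_div]
  rw [← sum_fiberwise _ f]
  refine sum_congr rfl fun j _ => ?_
  calc ∑ a with f a = j, q (f a) / #{a' | f a' = f a} * P a z
      = q j / #{a | f a = j} * ∑ a with f a = j, P z a := by
        rw [mul_sum]
        exact sum_congr rfl fun a ha => by rw [(mem_filter.1 ha).2, hP.apply]
    _ = q j * Q j (f z) / #{a | f a = f z} := by
        rw [h, div_mul_eq_mul_div, mul_div_assoc, mul_div_assoc]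
        congr 1
        rw [div_eq_div_iff (hf.card_fiber_ne_zero j) (hf.card_fiber_ne_zero (f z)), mul_comm,
          h.card_mul_apply_comm hP, mul_comm]

theorem Matrix.IsLumping.uniformLift_vecMul_pow [Field R] [CharZero R] [DecidableEq α]
    {P : Matrix α α R} {Q : Matrix β β R} (h : IsLumping f P Q) (hP : P.IsSymm)
    (hf : Function.Surjective f) (q : β → R) (t : ℕ) :
    uniformLift f q ᵥ* (P ^ t) = uniformLift f (q ᵥ* (Q ^ t)) := by
  induction t with
  | zero => simp
  | succ t ih =>
    rw [pow_succ, pow_succ, ← vecMul_vecMul, ih, h.uniformLift_vecMul hP hf, vecMul_vecMul]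

theorem tv_uniformLift (hf : Function.Surjective f) (q p : β → ℝ) :
    tv (uniformLift f q) (uniformLift f p) = tv q p := by
  unfold tv uniformLift
  congr 1
  rw [← sum_fiberwise' univ f fun j => |q j / #{a | f a = j} - p j / #{a | f a = j}|]
  refine sum_congr rfl fun j _ => ?_
  rw [sum_const, nsmul_eq_mul, ← sub_div, abs_div, Nat.abs_cast,
    mul_div_cancel₀ _ (hf.card_fiber_ne_zero j)]

end UniformLift

section Hamming

variable {ι β : Type*} [Fintype ι] [DecidableEq ι] [DecidableEq β]

theorem hammingDist_update_add_ite (b z : ι → β) (k : ι) (v : β) :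
    hammingDist b (Function.update z k v) + (if b k = z k then 0 else 1) =
      hammingDist b z + if b k = v then 0 else 1 := by
  have hsum : ∀ y : ι → β, hammingDist b y = ∑ m, if b m = y m then 0 else 1 := fun y => by
    simp [hammingDist, card_filter, ite_not]
  rw [hsum, hsum, ← add_sum_erase _ _ (mem_univ k), ← add_sum_erase _ _ (mem_univ k),
    Function.update_self,
    sum_congr rfl fun m hm => by rw [Function.update_of_ne (ne_of_mem_erase hm)]]
  ring

theorem hammingDist_update_self_of_ne (z : ι → β) {k : ι} {v : β} (hv : v ≠ z k) :
    hammingDist z (Function.update z k v) = 1 := by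
  simpa [hv.symm] using hammingDist_update_add_ite z z k v

theorem exists_eq_update_of_hammingDist_eq_one {z u : ι → β} (h : hammingDist z u = 1) :
    ∃ k, u k ≠ z k ∧ Function.update z k (u k) = u := by
  obtain ⟨k, hk⟩ := card_eq_one.1 h
  have hdiff : ∀ m, z m ≠ u m ↔ m = k := fun m => by
    simpa using congr_arg (m ∈ ·) hk
  refine ⟨k, fun h' => (hdiff k).2 rfl h'.symm, funext fun m => ?_⟩
  rcases eq_or_ne m k with rfl | hm
  · exact Function.update_self ..
  · rw [Function.update_of_ne hm]
    exact not_not.1 fun h' => hm ((hdiff m).1 h')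

variable [Fintype β] {M : Type*} [AddCommMonoid M]

theorem sum_filter_hammingDist_eq_one (z : ι → β) (g : (ι → β) → M) :
    ∑ u with hammingDist z u = 1, g u =
      ∑ k, ∑ v ∈ univ.erase (z k), g (Function.update z k v) := by
  rw [sum_sigma']
  symm
  refine sum_bij (fun p _ => Function.update z p.1 p.2) ?_ ?_ ?_ fun _ _ => rfl
  · rintro ⟨k, v⟩ hp
    exact mem_filter.2
      ⟨mem_univ _, hammingDist_update_self_of_ne z (mem_erase.1 (mem_sigma.1 hp).2).1⟩
  · rintro ⟨k, v⟩ hp ⟨k', v'⟩ - heq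
    have hv := (mem_erase.1 (mem_sigma.1 hp).2).1
    obtain rfl : k = k' := by
      by_contra hk
      exact hv (by simpa [Function.update_of_ne hk] using congr_fun heq k)
    obtain rfl : v = v' := by simpa using congr_fun heq k
    rfl
  · intro u hu
    obtain ⟨k, hk, hu⟩ := exists_eq_update_of_hammingDist_eq_one (mem_filter.1 hu).2
    exact ⟨⟨k, u k⟩, mem_sigma.2 ⟨mem_univ _, mem_erase.2 ⟨hk, mem_univ _⟩⟩, hu⟩

theorem sum_erase_comp_hammingDist_update (b z : ι → β) (k : ι) (g : ℕ → M) :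
    ∑ v ∈ univ.erase (z k), g (hammingDist b (Function.update z k v)) =
      if b k = z k then (Fintype.card β - 1) • g (hammingDist b z + 1)
      else g (hammingDist b z - 1) + (Fintype.card β - 2) • g (hammingDist b z) := by
  have key := hammingDist_update_add_ite b z k
  split_ifs with hbz
  · rw [← card_univ, ← card_erase_of_mem (mem_univ (z k)), ← sum_const]
    refine sum_congr rfl fun v hv => ?_
    have := key v
    rw [if_pos hbz, if_neg (hbz ▸ (mem_erase.1 hv).1).symm] at this
    rw [← this, add_zero]
  · have hb : b k ∈ univ.erase (z k) := mem_erase.2 ⟨hbz, mem_univ _⟩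
    have hcard : #((univ.erase (z k)).erase (b k)) = Fintype.card β - 2 := by
      rw [card_erase_of_mem hb, card_erase_of_mem (mem_univ _), card_univ, Nat.sub_sub]
    rw [← add_sum_erase _ _ hb, ← hcard, ← sum_const]
    have hdown := key (b k)
    rw [if_neg hbz, if_pos rfl] at hdown
    congr 1
    · rw [show hammingDist b (Function.update z k (b k)) = hammingDist b z - 1 by omega]
    · refine sum_congr rfl fun v hv => ?_
      have := key v
      rw [if_neg hbz, if_neg (Ne.symm (mem_erase.1 hv).1)] at this
      rw [Nat.add_right_cancel this]

theorem sum_filter_hammingDist_eq_one_comp_hammingDist (b z : ι → β) (g : ℕ → M) :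
    ∑ u with hammingDist z u = 1, g (hammingDist b u) =
      (Fintype.card ι - hammingDist b z) • (Fintype.card β - 1) • g (hammingDist b z + 1) +
        hammingDist b z • (g (hammingDist b z - 1) +
          (Fintype.card β - 2) • g (hammingDist b z)) := by
  have hsame : #{k | b k = z k} = Fintype.card ι - hammingDist b z := by
    have := card_filter_add_card_filter_not (s := univ) fun k => b k = z k
    rw [card_univ] at this
    exact Nat.eq_sub_of_add_eq this
  simp_rw [sum_filter_hammingDist_eq_one, sum_erase_comp_hammingDist_update, sum_ite, sum_const,
    hsame]
  rfl

theorem card_filter_hammingDist_eq (b : ι → β) (j : ℕ) :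
    #{z | hammingDist b z = j} = (Fintype.card ι).choose j * (Fintype.card β - 1) ^ j := by
  have hmaps : ((({z | hammingDist b z = j} : Finset (ι → β))) : Set (ι → β)).MapsTo
      (fun z => ({k | b k ≠ z k} : Finset ι)) (powersetCard j (univ : Finset ι)) := fun z hz =>
    mem_powersetCard.2 ⟨subset_univ _, (mem_filter.1 hz).2⟩
  rw [card_eq_sum_card_fiberwise hmaps, ← card_univ, ← card_powersetCard, ← smul_eq_mul,
    ← sum_const]
  refine sum_congr rfl fun S hS => ?_
  have hfiber : ({z ∈ {z | hammingDist b z = j} | ({k | b k ≠ z k} : Finset ι) = S} :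
        Finset (ι → β)) =
      Fintype.piFinset fun k => if k ∈ S then univ.erase (b k) else {b k} := by
    ext z
    simp only [mem_filter, mem_univ, true_and, Fintype.mem_piFinset]
    have hmem (k : ι) :
        z k ∈ (if k ∈ S then univ.erase (b k) else {b k}) ↔ (b k ≠ z k ↔ k ∈ S) := by
      by_cases hk : k ∈ S <;> simp [hk, eq_comm]
    simp_rw [hmem]
    constructor
    · rintro ⟨-, rfl⟩ k
      simp
    · intro h
      have hsupp : ({k | b k ≠ z k} : Finset ι) = S := by ext k; simpa using h k
      exact ⟨(congr_arg card hsupp).trans (mem_powersetCard.1 hS).2, hsupp⟩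
  rw [hfiber, Fintype.card_piFinset]
  simp_rw [apply_ite card, card_erase_of_mem (mem_univ _), card_singleton, card_univ]
  rw [prod_ite_mem, univ_inter, prod_const, (mem_powersetCard.1 hS).2]

end Hamming

namespace BD

theorem P_apply {n d : ℕ} (hn : 2 ≤ n) (x y : Fin (d + 1)) :
    P n d x y = 1 / (d * (n - 1)) *
      ((d - x) • (n - 1) • (if (x : ℕ) + 1 = y then (1 : ℝ) else 0) +
        (x : ℕ) • ((if (x : ℕ) - 1 = y then 1 else 0) +
          (n - 2) • if (x : ℕ) = y then 1 else 0)) := by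
  have hx : (x : ℕ) ≤ d := Nat.lt_succ_iff.1 x.2
  have hn1 : (n : ℝ) - 1 ≠ 0 := by
    have : (2 : ℝ) ≤ n := by exact_mod_cast hn
    linarith
  simp only [P, of_apply]
  generalize (x : ℕ) = j at hx ⊢
  generalize (y : ℕ) = m
  have hcases : m + 1 = j ∨ m = j ∨ m = j + 1 ∨ m + 1 ≠ j ∧ m ≠ j ∧ m ≠ j + 1 := by
    omega
  rcases hcases with rfl | rfl | rfl | ⟨h1, h2, h3⟩
  · simp only [show m + 1 + 1 ≠ m by omega, Nat.add_sub_cancel, show m + 1 ≠ m by omega,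
      if_true, if_false, smul_zero, add_zero, nsmul_eq_mul]
    push_cast
    ring
  · rcases eq_or_ne m 0 with rfl | hm
    · simp
    simp only [show m + 1 ≠ m by omega, show m - 1 ≠ m by omega, if_true, if_false, smul_zero,
      zero_add, nsmul_eq_mul]
    push_cast [Nat.cast_sub hn]
    ring
  · simp only [show j + 1 + 1 ≠ j by omega, show j - 1 ≠ j + 1 by omega,
      show j ≠ j + 1 by omega, show j + 1 ≠ j by omega, if_true, if_false, smul_zero, add_zero,
      nsmul_eq_mul]
    push_cast [Nat.cast_sub hx, Nat.cast_sub (by omega : 1 ≤ n)]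
    rw [one_div_mul_eq_div, mul_one, mul_div_mul_right _ _ hn1]
  · simp only [Ne.symm h2, Ne.symm h3, show j - 1 ≠ m by omega, h1, h2, h3, if_false, smul_zero,
      add_zero, mul_zero]

end BD

namespace RW

variable {n d : ℕ}

def level (b z : State n d) : Fin (d + 1) :=
  ⟨hammingDist b z,
    Nat.lt_succ_of_le (hammingDist_le_card_fintype.trans_eq (Fintype.card_fin d))⟩

theorem card_filter_level_eq (b : State n d) (j : Fin (d + 1)) :
    #{z | level b z = j} = d.choose j * (n - 1) ^ (j : ℕ) := by
  have := card_filter_hammingDist_eq b j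
  simp only [Fintype.card_fin] at this
  rw [← this]
  congr 1
  ext z
  simp [level, Fin.ext_iff]

theorem level_surjective (hn : 2 ≤ n) (b : State n d) : Function.Surjective (level b) := by
  intro j
  have hpos : 0 < #{z | level b z = j} := by
    rw [card_filter_level_eq]
    exact Nat.mul_pos (Nat.choose_pos (Nat.lt_succ_iff.1 j.2)) (Nat.pow_pos (by omega))
  obtain ⟨z, hz⟩ := card_pos.1 hpos
  exact ⟨z, (mem_filter.1 hz).2⟩

theorem P_isSymm : (P n d).IsSymm :=
  IsSymm.ext fun x y => by simp [P, hammingDist_comm]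

theorem isLumping_level (hn : 2 ≤ n) (b : State n d) :
    IsLumping (level b) (P n d) (BD.P n d) := by
  intro z i
  calc ∑ u with level b u = i, P n d z u
      = 1 / (d * (n - 1)) * ∑ u with hammingDist z u = 1,
          if hammingDist b u = i then (1 : ℝ) else 0 := by
        rw [mul_sum, sum_filter, sum_filter]
        refine sum_congr rfl fun u _ => ?_
        simp only [P, level, Fin.ext_iff, of_apply]
        split_ifs <;> simp
    _ = BD.P n d (level b z) i := by
        have hcount := sum_filter_hammingDist_eq_one_comp_hammingDist b z
          fun m => if m = (i : ℕ) then (1 : ℝ) else 0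
        rw [Fintype.card_fin, Fintype.card_fin] at hcount
        rw [BD.P_apply hn, hcount]
        rfl

theorem mu_eq_uniformLift (b : State n d) (x : Fin (d + 1)) :
    mu n d b x = uniformLift (level b) (Pi.single x 1) := by
  funext w
  have hshell : shell n d b x = ({z | level b z = x} : Finset (State n d)) := by
    ext z
    simp [shell, level, Fin.ext_iff]
  by_cases hw : level b w = x
  · simp [mu, uniformLift, hw, hshell, show hammingDist b w = x from congr_arg Fin.val hw]
  · simp [mu, uniformLift, hw, show hammingDist b w ≠ x from fun h => hw (Fin.ext h)]

theorem pi_eq_uniformLift (hn : 2 ≤ n) (b : State n d) :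
    pi n d = uniformLift (level b) (BD.pi n d) := by
  funext z
  have hpos : (0 : ℝ) < d.choose (level b z) * ((n : ℝ) - 1) ^ (level b z : ℕ) := by
    have : (1 : ℝ) < n := by exact_mod_cast hn
    exact mul_pos (Nat.cast_pos.2 (Nat.choose_pos (Nat.lt_succ_iff.1 (level b z).2)))
      (pow_pos (by linarith) _)
  rw [pi, uniformLift, BD.pi, card_filter_level_eq]
  push_cast [Nat.cast_sub (by omega : 1 ≤ n)]
  rw [div_right_comm, div_self hpos.ne']

end RW

/-- The TV distance to stationarity of the RWBD chain started at `x` equals the TV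
distance to stationarity of the Rook's Walk started from the uniform distribution on
the `x`-th Hamming shell. -/
theorem rwbd_tv_eq_rook_walk_tv (n d : ℕ) (hn : 3 ≤ n)
    (x : Fin (d + 1)) (t : ℕ) :
    tv ((BD.P n d ^ t) x) (BD.pi n d) =
      tv (fun z => ∑ w : RW.State n d,
            RW.mu n d (fun _ => (⟨0, by omega⟩ : Fin n)) (x : ℕ) w * (RW.P n d ^ t) w z)
        (RW.pi n d) := by
  set b : RW.State n d := fun _ => ⟨0, by omega⟩
  have hsurj := RW.level_surjective (by omega) b
  have hevol : (fun z => ∑ w, RW.mu n d b x w * (RW.P n d ^ t) w z) =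
      uniformLift (RW.level b) ((BD.P n d ^ t) x) := by
    rw [RW.mu_eq_uniformLift]
    exact ((RW.isLumping_level (by omega) b).uniformLift_vecMul_pow RW.P_isSymm hsurj _ t).trans
      (by rw [single_one_vecMul]; rfl)
  rw [hevol, RW.pi_eq_uniformLift (by omega) b, tv_uniformLift hsurj]
end
end

section
/- For integers N ≥ 1, s ≥ 2 and 0 ≤ m < r ≤ N, the Krawtchouk polynomials K_m = K_{m,N,s} and K_r = K_{r,N,s} are orthogonal with respect to the weighted inner product: Σ_{i=0}^N C(N,i)·(s−1)^i·K_m(i)·K_r(i) = 0. -/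
open Finset

noncomputable section

/-- The generalized binomial coefficient `C(x,j) = x(x-1)⋯(x-j+1)/j!`. -/
def genChoose (x : ℝ) (j : ℕ) : ℝ :=
  (∏ i ∈ Finset.range j, (x - (i : ℝ))) / (Nat.factorial j : ℝ)

/-- The Krawtchouk polynomial `K_{m,N,s}` evaluated at `x`. -/
def kraw (m N s : ℕ) (x : ℝ) : ℝ :=
  ∑ j ∈ Finset.range (m + 1),
    (-1 : ℝ) ^ j * genChoose x j * genChoose ((N : ℝ) - x) (m - j) * ((s : ℝ) - 1) ^ (m - j)

lemma genChoose_zero (x : ℝ) : genChoose x 0 = 1 := by simp [genChoose]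

lemma genChoose_succ_left (y : ℝ) (k : ℕ) :
    genChoose (y+1) (k+1) = genChoose y (k+1) + genChoose y k := by
  have h1 : ∏ i ∈ range (k+1), (y + 1 - (i:ℝ)) = (∏ i ∈ range k, (y - (i:ℝ))) * (y+1) := by
    rw [Finset.prod_range_succ']
    congr 1
    · apply Finset.prod_congr rfl; intro i _; push_cast; ring
    · simp
  have h2 : ∏ i ∈ range (k+1), (y - (i:ℝ)) = (∏ i ∈ range k, (y - (i:ℝ))) * (y - k) :=
    Finset.prod_range_succ _ _
  have hk : (k.factorial : ℝ) ≠ 0 := by exact_mod_cast k.factorial_ne_zero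
  have hk1 : ((k+1 : ℕ).factorial : ℝ) ≠ 0 := by exact_mod_cast (k+1).factorial_ne_zero
  simp only [genChoose, h1, h2]
  rw [Nat.factorial_succ]
  push_cast
  field_simp
  ring

lemma genChoose_succ_left' (y : ℝ) (k : ℕ) :
    genChoose (y+1) k = genChoose y k + (if k = 0 then 0 else genChoose y (k-1)) := by
  cases k with
  | zero => simp [genChoose]
  | succ k => simp [genChoose_succ_left]

lemma genChoose_zero_left (k : ℕ) (hk : k ≠ 0) : genChoose 0 k = 0 := by
  obtain ⟨k, rfl⟩ := Nat.exists_eq_succ_of_ne_zero hk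
  simp only [genChoose]
  rw [Finset.prod_eq_zero (Finset.mem_range.2 (Nat.succ_pos k)) (by simp)]
  simp

def krawAux (m N s : ℕ) (x : ℝ) : ℝ := match m with
  | 0 => 0
  | m+1 => kraw m N s x

lemma kraw_zero (N s : ℕ) (x : ℝ) : kraw 0 N s x = 1 := by
  simp [kraw, genChoose]

/-- Recurrence raising N. -/
lemma kraw_succN (m N s : ℕ) (x : ℝ) :
    kraw m (N+1) s x = kraw m N s x + ((s:ℝ)-1) * krawAux m N s x := by
  cases m with
  | zero => simp [kraw_zero, krawAux]
  | succ m =>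
    have hc : ((N+1:ℕ):ℝ) - x = ((N:ℝ) - x) + 1 := by push_cast; ring
    simp only [kraw, krawAux, hc, genChoose_succ_left']
    have : ∀ j ∈ Finset.range (m+1+1),
        (-1:ℝ)^j * genChoose x j *
          (genChoose ((N:ℝ)-x) (m+1-j) + (if m+1-j = 0 then 0 else genChoose ((N:ℝ)-x) (m+1-j-1)))
          * ((s:ℝ)-1)^(m+1-j)
        = (-1:ℝ)^j * genChoose x j * genChoose ((N:ℝ)-x) (m+1-j) * ((s:ℝ)-1)^(m+1-j)
          + (if j ≤ m then ((s:ℝ)-1) * ((-1:ℝ)^j * genChoose x j * genChoose ((N:ℝ)-x) (m-j) * ((s:ℝ)-1)^(m-j)) else 0) := by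
      intro j hj
      rcases Nat.lt_or_ge j (m+1) with h | h
      · have h1 : m+1-j ≠ 0 := by omega
        have h2 : m+1-j-1 = m-j := by omega
        have h3 : m+1-j = (m-j)+1 := by omega
        rw [if_neg h1, if_pos (by omega), h2, h3]
        rw [pow_succ]
        ring
      · have hj' : j = m+1 := by
          have := Finset.mem_range.1 hj; omega
        subst hj'
        rw [if_pos (by omega), if_neg (by omega)]
        ring
    rw [Finset.sum_congr rfl this, Finset.sum_add_distrib]
    congr 1
    rw [Finset.sum_range_succ, if_neg (by omega), add_zero, Finset.mul_sum]
    apply Finset.sum_congr rfl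
    intro j hj
    rw [if_pos (by have := Finset.mem_range.1 hj; omega)]

/-- Recurrence shifting x by 1. -/
lemma kraw_succ_x (m N s : ℕ) (x : ℝ) :
    kraw m (N+1) s (x+1) = kraw m N s x - krawAux m N s x := by
  cases m with
  | zero => simp [kraw_zero, krawAux]
  | succ m =>
    have hc : ((N+1:ℕ):ℝ) - (x+1) = ((N:ℝ) - x) := by push_cast; ring
    simp only [kraw, krawAux, hc, genChoose_succ_left']
    have : ∀ j ∈ Finset.range (m+1+1),
        (-1:ℝ)^j * (genChoose x j + (if j = 0 then 0 else genChoose x (j-1)))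
          * genChoose ((N:ℝ)-x) (m+1-j) * ((s:ℝ)-1)^(m+1-j)
        = (-1:ℝ)^j * genChoose x j * genChoose ((N:ℝ)-x) (m+1-j) * ((s:ℝ)-1)^(m+1-j)
          + (-1:ℝ)^j * (if j = 0 then 0 else genChoose x (j-1)) * genChoose ((N:ℝ)-x) (m+1-j) * ((s:ℝ)-1)^(m+1-j) := by
      intro j _; ring
    rw [Finset.sum_congr rfl this, Finset.sum_add_distrib]
    congr 1
    rw [Finset.sum_range_succ']
    simp only [if_neg (Nat.succ_ne_zero _), if_pos rfl, Nat.succ_sub_one]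
    have : ∀ j ∈ Finset.range (m+1),
        (-1:ℝ)^(j+1) * genChoose x j * genChoose ((N:ℝ)-x) (m+1-(j+1)) * ((s:ℝ)-1)^(m+1-(j+1))
        = -((-1:ℝ)^j * genChoose x j * genChoose ((N:ℝ)-x) (m-j) * ((s:ℝ)-1)^(m-j)) := by
      intro j _
      have : m+1-(j+1) = m-j := by omega
      rw [this, pow_succ]
      ring
    rw [Finset.sum_congr rfl this, Finset.sum_neg_distrib]
    simp


lemma kraw_zero_N (r s : ℕ) (hr : r ≠ 0) : kraw r 0 s 0 = 0 := by
  simp only [kraw, Nat.cast_zero, sub_zero]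
  apply Finset.sum_eq_zero
  intro j hj
  rcases Nat.eq_zero_or_pos j with h | h
  · subst h
    rw [genChoose_zero_left (r-0) (by omega)]
    ring
  · obtain ⟨j', rfl⟩ := Nat.exists_eq_succ_of_ne_zero (by omega : j ≠ 0)
    rw [genChoose_zero_left (j'+1) (by omega)]
    ring

lemma key (s : ℕ) : ∀ N m r : ℕ, m < r →
    ∑ i ∈ Finset.range (N + 1),
      (N.choose i : ℝ) * ((s : ℝ) - 1) ^ i * kraw m N s (i : ℝ) * kraw r N s (i : ℝ) = 0 := by
  intro N
  induction N with
  | zero =>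
    intro m r hmr
    rw [show (0:ℕ)+1 = 1 from rfl, Finset.sum_range_one]
    simp only [Nat.cast_zero]
    rw [kraw_zero_N r s (by omega)]
    ring
  | succ N ih =>
    intro m r hmr
    set b : ℕ → ℝ := fun i =>
      (N.choose i : ℝ) * ((s : ℝ) - 1) ^ i * kraw m (N+1) s (i : ℝ) * kraw r (N+1) s (i : ℝ)
      with hbdef
    set a : ℕ → ℝ := fun i =>
      (N.choose i : ℝ) * ((s : ℝ) - 1) ^ i *
        (((s:ℝ)-1) * (kraw m (N+1) s ((i : ℝ)+1) * kraw r (N+1) s ((i : ℝ)+1))) with hadef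
    set g : ℕ → ℝ := fun i =>
      ((N+1).choose i : ℝ) * ((s : ℝ) - 1) ^ i * kraw m (N+1) s (i : ℝ) * kraw r (N+1) s (i : ℝ)
      with hgdef
    have hb := Finset.sum_range_succ' b (N+1)
    have hb2 := Finset.sum_range_succ b (N+1)
    have hg := Finset.sum_range_succ' g (N+1)
    have hbtop : b (N+1) = 0 := by
      rw [hbdef]; simp [Nat.choose_succ_self]
    have hg0 : g 0 = b 0 := by rw [hbdef, hgdef]; simp
    have hsplit : ∑ j ∈ Finset.range (N+1), g (j+1)
        = (∑ j ∈ Finset.range (N+1), a j) + ∑ j ∈ Finset.range (N+1), b (j+1) := by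
      rw [← Finset.sum_add_distrib]
      apply Finset.sum_congr rfl
      intro j _
      rw [hbdef, hgdef, hadef]
      simp only [Nat.choose_succ_succ]
      push_cast
      ring
    have step : ∑ i ∈ Finset.range (N + 2), g i
        = (∑ i ∈ Finset.range (N+1), b i) + ∑ i ∈ Finset.range (N+1), a i := by
      rw [hg, hsplit, hg0]
      have : ∑ j ∈ Finset.range (N+1), b (j+1) + b 0 = ∑ i ∈ Finset.range (N+1), b i := by
        rw [← hb, hb2, hbtop, add_zero]
      linarith [this]
    have hmain : ∑ i ∈ Finset.range (N + 2), g i = 0 := by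
      rw [step]
      have hA : ∑ i ∈ Finset.range (N+1), (b i + a i)
          = ∑ i ∈ Finset.range (N+1),
            ((s:ℝ) * ((N.choose i : ℝ) * ((s : ℝ) - 1) ^ i * kraw m N s (i:ℝ) * kraw r N s (i:ℝ))
            + (s:ℝ) * ((s:ℝ)-1) * ((N.choose i : ℝ) * ((s : ℝ) - 1) ^ i * krawAux m N s (i:ℝ) * krawAux r N s (i:ℝ))) := by
        apply Finset.sum_congr rfl
        intro i _
        rw [hbdef, hadef]
        simp only
        rw [kraw_succN m N s (i:ℝ), kraw_succN r N s (i:ℝ),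
            kraw_succ_x m N s (i:ℝ), kraw_succ_x r N s (i:ℝ)]
        ring
      rw [← Finset.sum_add_distrib, hA, Finset.sum_add_distrib, ← Finset.mul_sum,
          ← Finset.mul_sum, ih m r hmr, mul_zero, zero_add]
      cases m with
      | zero => simp [krawAux]
      | succ m' =>
        obtain ⟨r', rfl⟩ := Nat.exists_eq_succ_of_ne_zero (by omega : r ≠ 0)
        simp only [krawAux]
        rw [ih m' r' (by omega), mul_zero]
    exact hmain

/-- Orthogonality of Krawtchouk polynomials with respect to the weight
`C(N,i)(s-1)^i`. -/
theorem krawtchouk_orthogonal (N s m r : ℕ) (hN : 1 ≤ N) (hs : 2 ≤ s)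
    (hmr : m < r) (hrN : r ≤ N) :
    ∑ i ∈ Finset.range (N + 1),
      (N.choose i : ℝ) * ((s : ℝ) - 1) ^ i * kraw m N s (i : ℝ) * kraw r N s (i : ℝ) = 0 :=
  key s N m r hmr
end
end

section
/- For every n ≥ 3, d ≥ 2 and 0 ≤ m ≤ d, the Krawtchouk polynomial K_m = K_{m,d,n} is an eigenfunction of the RWBD transition matrix P* with eigenvalue λ_m = 1 − mn/(d(n−1)): for all x ∈ {0,…,d}, Σ_{y=0}^d P*(x,y)·K_m(y) = (1 − mn/(d(n−1)))·K_m(x). -/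
open Finset

noncomputable section

/-!
`K_m(y)` is the coefficient of `X^m` in `G_y = (1 - X)^y (1 + qX)^(d - y)`, where `q = n - 1`.
Since `G_{y-1}` and `G_{y+1}` are `G_y` times `(1 + qX)/(1 - X)` and its inverse, a direct
computation gives `y G_{y-1} + y(q - 1) G_y + q(d - y) G_{y+1} = dq G_y - (q + 1) X G_y'`.
On the coefficient of `X^m` the operator `X d/dX` acts as multiplication by `m`, so this is a
three-term recurrence for `K_m`, which says exactly that `K_m` is an eigenvector of the
tridiagonal matrix `P*` with eigenvalue `1 - mn/(d(n - 1))`.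
-/

open Polynomial

lemma genChoose_natCast (k j : ℕ) : genChoose k j = k.choose j := by
  rw [genChoose, ← descPochhammer_eval_eq_prod_range, descPochhammer_eval_eq_descFactorial,
    Nat.descFactorial_eq_factorial_mul_choose, Nat.cast_mul,
    mul_div_cancel_left₀ _ (by positivity)]

lemma coeff_one_add_C_mul_X_pow {R : Type*} [CommSemiring R] (c : R) (y j : ℕ) :
    ((1 + C c * X) ^ y).coeff j = y.choose j * c ^ j := by
  have hterm (k : ℕ) : (C c * X) ^ k * 1 ^ (y - k) * (y.choose k : R[X]) =
      C (y.choose k * c ^ k) * X ^ k := by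
    rw [one_pow, mul_one, mul_pow, ← C_pow, ← C_eq_natCast, C_mul]; ring
  simp only [add_comm (1 : R[X]), add_pow, hterm, finsetSum_coeff, coeff_C_mul_X_pow]
  rw [Finset.sum_ite_eq]
  split_ifs with h
  · rfl
  · simp [Nat.choose_eq_zero_of_lt (by simpa using h)]

lemma coeff_X_mul_derivative {R : Type*} [Semiring R] (p : R[X]) (m : ℕ) :
    (X * derivative p).coeff m = m * p.coeff m := by
  cases m with
  | zero => simp
  | succ k => rw [coeff_X_mul, coeff_derivative, ← Nat.cast_succ, Nat.cast_comm]

def krawGen {R : Type*} [CommRing R] (q : R) (a b : ℕ) : R[X] :=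
  (1 - X) ^ a * (1 + C q * X) ^ b

lemma kraw_eq_coeff_krawGen (m d n y : ℕ) (hy : y ≤ d) :
    kraw m d n y = (krawGen ((n : ℝ) - 1) y (d - y)).coeff m := by
  have hdy : (d : ℝ) - y = (d - y : ℕ) := by rw [Nat.cast_sub hy]
  have h1X : (1 - X : ℝ[X]) = 1 + C (-1) * X := by rw [map_neg, C_1]; ring
  rw [krawGen, h1X, coeff_mul, Nat.sum_antidiagonal_eq_sum_range_succ_mk, kraw]
  refine Finset.sum_congr rfl fun j _ => ?_
  rw [coeff_one_add_C_mul_X_pow, coeff_one_add_C_mul_X_pow, hdy, genChoose_natCast,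
    genChoose_natCast]
  ring

-- The truncated subtractions `a - 1` and `b - 1` are harmless: their terms carry the factors
-- `a` and `b`.
lemma krawGen_recurrence {R : Type*} [CommRing R] (q : R) (a b : ℕ) :
    C (a : R) * krawGen q (a - 1) (b + 1) + C (a * (q - 1)) * krawGen q a b
      + C (q * b) * krawGen q (a + 1) (b - 1)
    = C ((a + b) * q) * krawGen q a b - C (q + 1) * (X * derivative (krawGen q a b)) := by
  rcases a with _ | a <;> rcases b with _ | b <;>
    simp only [krawGen, Nat.add_sub_cancel, Nat.zero_sub, Nat.cast_zero, Nat.cast_succ,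
      pow_zero, derivative_mul, derivative_pow, derivative_one, derivative_X, derivative_C,
      map_add, map_mul, map_sub, map_one, map_zero, C_eq_natCast] <;>
    ring

lemma coeff_krawGen_recurrence {R : Type*} [CommRing R] (q : R) (a b m : ℕ) :
    a * (krawGen q (a - 1) (b + 1)).coeff m + a * (q - 1) * (krawGen q a b).coeff m
      + q * b * (krawGen q (a + 1) (b - 1)).coeff m
    = ((a + b) * q - m * (q + 1)) * (krawGen q a b).coeff m := by
  have h := congrArg (coeff · m) (krawGen_recurrence q a b)
  simp only [coeff_add, coeff_sub, coeff_C_mul, coeff_X_mul_derivative] at h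
  linear_combination h

lemma kraw_three_term_recurrence (n d m x : ℕ) (hx : x ≤ d) :
    x * kraw m d n (x - 1 : ℕ) + x * (n - 2) * kraw m d n x
      + (n - 1) * (d - x) * kraw m d n (x + 1 : ℕ)
    = (d * (n - 1) - m * n) * kraw m d n x := by
  have hK := kraw_eq_coeff_krawGen m d n x hx
  have hKpred : (x : ℝ) * kraw m d n (x - 1 : ℕ)
      = x * (krawGen ((n : ℝ) - 1) (x - 1) (d - x + 1)).coeff m := by
    rcases x with _ | x
    · simp
    · rw [Nat.add_sub_cancel, kraw_eq_coeff_krawGen m d n x (by omega),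
        show d - x = d - (x + 1) + 1 by omega]
  have hKsucc : ((d : ℝ) - x) * kraw m d n (x + 1 : ℕ)
      = (d - x : ℕ) * (krawGen ((n : ℝ) - 1) (x + 1) (d - x - 1)).coeff m := by
    rcases hx.eq_or_lt with rfl | hlt
    · simp
    · rw [kraw_eq_coeff_krawGen m d n (x + 1) hlt, Nat.cast_sub hx, Nat.sub_sub]
  have hrec := coeff_krawGen_recurrence ((n : ℝ) - 1) x (d - x) m
  rw [Nat.cast_sub hx] at hrec hKsucc
  linear_combination hrec + hKpred + (n - 1) * hKsucc + (x * (n - 2) - d * (n - 1) + m * n) * hK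

lemma Fin.sum_ite_val_eq_mul {R : Type*} [Semiring R] (N k : ℕ) (c : R) (f : ℕ → R) :
    ∑ y : Fin N, (if (y : ℕ) = k then c else 0) * f y = if k < N then c * f k else 0 := by
  simp only [ite_mul, zero_mul]
  rw [Fin.sum_univ_eq_sum_range (fun y => if y = k then c * f y else 0)]
  simp only [sum_ite_eq', mem_range]

lemma BD.sum_P_mul (n d : ℕ) (x : Fin (d + 1)) (f : ℕ → ℝ) :
    ∑ y : Fin (d + 1), BD.P n d x y * f y
      = x / (d * (n - 1)) * f (x - 1) + x * (n - 2) / (d * (n - 1)) * f x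
        + (d - x) / d * f (x + 1) := by
  obtain ⟨x, hx⟩ := x
  have hrow (y : Fin (d + 1)) : BD.P n d ⟨x, hx⟩ y
      = (if (y : ℕ) = x - 1 then (x : ℝ) / (d * (n - 1)) else 0)
        + (if (y : ℕ) = x then (x : ℝ) * (n - 2) / (d * (n - 1)) else 0)
        + (if (y : ℕ) = x + 1 then ((d : ℝ) - x) / d else 0) := by
    simp only [BD.P, Matrix.of_apply]
    split_ifs <;> first | omega | simp_all
    -- at `x = 0` the first two indicators overlap, but the first coefficient is `0`
    obtain rfl : x = 0 := by omega
    simp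
  simp only [hrow, add_mul, sum_add_distrib, Fin.sum_ite_val_eq_mul]
  rw [if_pos (by omega), if_pos hx]
  rcases (Nat.lt_succ_iff.mp hx).lt_or_eq with hlt | rfl
  · rw [if_pos (by omega)]
  · simp

theorem rwbd_krawtchouk_eigenfunction_general (n d m : ℕ) (hn : 3 ≤ n) (hd : 2 ≤ d)
    (x : Fin (d + 1)) :
    ∑ y : Fin (d + 1), BD.P n d x y * kraw m d n ((y : ℕ) : ℝ) =
      (1 - (m : ℝ) * (n : ℝ) / ((d : ℝ) * ((n : ℝ) - 1))) * kraw m d n ((x : ℕ) : ℝ) := by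
  have hd0 : (d : ℝ) ≠ 0 := Nat.cast_ne_zero.mpr (by omega)
  have hn1 : (n : ℝ) - 1 ≠ 0 := by
    have : (3 : ℝ) ≤ n := by exact_mod_cast hn
    linarith
  rw [BD.sum_P_mul n d x (fun y => kraw m d n y)]
  have h := kraw_three_term_recurrence n d m x (Nat.lt_succ_iff.mp x.isLt)
  field_simp
  linear_combination h

/-- The Krawtchouk polynomial `K_{m,d,n}` is an eigenfunction of the RWBD transition
matrix with eigenvalue `1 - mn/(d(n-1))`. -/
theorem rwbd_krawtchouk_eigenfunction (n d m : ℕ) (hn : 3 ≤ n) (hd : 2 ≤ d)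
    (hm : m ≤ d) (x : Fin (d + 1)) :
    ∑ y : Fin (d + 1), BD.P n d x y * kraw m d n ((y : ℕ) : ℝ) =
      (1 - (m : ℝ) * (n : ℝ) / ((d : ℝ) * ((n : ℝ) - 1))) * kraw m d n ((x : ℕ) : ℝ) :=
  rwbd_krawtchouk_eigenfunction_general n d m hn hd x
end
end

section
/- For every n ≥ 3 and d ≥ 2, the function Φ(x) = 1 − nx/(d(n−1)) on {0,…,d} is an eigenfunction of the RWBD transition matrix P* with eigenvalue α = 1 − n/(d(n−1)): for all x ∈ {0,…,d}, Σ_{y=0}^d P*(x,y)·Φ(y) = (1 − n/(d(n−1)))·Φ(x). -/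
open Finset

noncomputable section

/-- `Φ(x) = 1 - nx/(d(n-1))` is an eigenfunction of the RWBD transition matrix with
eigenvalue `1 - n/(d(n-1))`. -/
theorem rwbd_phi_eigenfunction (n d : ℕ) (hn : 3 ≤ n) (hd : 2 ≤ d) (x : Fin (d + 1)) :
    ∑ y : Fin (d + 1), BD.P n d x y * (1 - (n : ℝ) * ((y : ℕ) : ℝ) / ((d : ℝ) * ((n : ℝ) - 1))) =
      (1 - (n : ℝ) / ((d : ℝ) * ((n : ℝ) - 1))) *
        (1 - (n : ℝ) * ((x : ℕ) : ℝ) / ((d : ℝ) * ((n : ℝ) - 1))) := by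
  have hn' : (3:ℝ) ≤ (n:ℝ) := by exact_mod_cast hn
  have hd' : (2:ℝ) ≤ (d:ℝ) := by exact_mod_cast hd
  have hdne : (d:ℝ) ≠ 0 := by linarith
  have hne : (n:ℝ) - 1 ≠ 0 := by linarith
  obtain ⟨k, hklt⟩ := x
  have hk : k ≤ d := Nat.lt_succ_iff.mp hklt
  simp only [Fin.val_mk]
  have hstep : ∀ y : Fin (d + 1),
      BD.P n d ⟨k, hklt⟩ y * (1 - (n:ℝ) * ((y:ℕ):ℝ) / ((d:ℝ) * ((n:ℝ) - 1))) =
      (if (y:ℕ) + 1 = k then ((k:ℝ) / ((d:ℝ) * ((n:ℝ) - 1))) * (1 - (n:ℝ) * ((y:ℕ):ℝ) / ((d:ℝ) * ((n:ℝ) - 1))) else 0)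
      + ((if (y:ℕ) = k then ((k:ℝ) * ((n:ℝ) - 2) / ((d:ℝ) * ((n:ℝ) - 1))) * (1 - (n:ℝ) * ((y:ℕ):ℝ) / ((d:ℝ) * ((n:ℝ) - 1))) else 0)
      + (if (y:ℕ) = k + 1 then (((d:ℝ) - (k:ℝ)) / (d:ℝ)) * (1 - (n:ℝ) * ((y:ℕ):ℝ) / ((d:ℝ) * ((n:ℝ) - 1))) else 0)) := by
    intro y
    simp only [BD.P, Matrix.of_apply, Fin.val_mk]
    split_ifs <;> first | omega | ring
  simp only [hstep]
  rw [Finset.sum_add_distrib, Finset.sum_add_distrib]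
  rw [Fin.sum_univ_eq_sum_range (fun j : ℕ => if j + 1 = k then ((k:ℝ) / ((d:ℝ) * ((n:ℝ) - 1))) * (1 - (n:ℝ) * (j:ℝ) / ((d:ℝ) * ((n:ℝ) - 1))) else 0) (d+1)]
  rw [Fin.sum_univ_eq_sum_range (fun j : ℕ => if j = k then ((k:ℝ) * ((n:ℝ) - 2) / ((d:ℝ) * ((n:ℝ) - 1))) * (1 - (n:ℝ) * (j:ℝ) / ((d:ℝ) * ((n:ℝ) - 1))) else 0) (d+1)]
  rw [Fin.sum_univ_eq_sum_range (fun j : ℕ => if j = k + 1 then (((d:ℝ) - (k:ℝ)) / (d:ℝ)) * (1 - (n:ℝ) * (j:ℝ) / ((d:ℝ) * ((n:ℝ) - 1))) else 0) (d+1)]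
  have h1 : (∑ j ∈ Finset.range (d+1), if j + 1 = k then ((k:ℝ) / ((d:ℝ) * ((n:ℝ) - 1))) * (1 - (n:ℝ) * (j:ℝ) / ((d:ℝ) * ((n:ℝ) - 1))) else 0)
      = ((k:ℝ) / ((d:ℝ) * ((n:ℝ) - 1))) * (1 - (n:ℝ) * ((k:ℝ) - 1) / ((d:ℝ) * ((n:ℝ) - 1))) := by
    rcases k with _ | m
    · simp
    · have hm : m ∈ Finset.range (d+1) := by simp; omega
      simp only [add_left_inj]
      rw [Finset.sum_ite_eq' (Finset.range (d+1)) m, if_pos hm]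
      push_cast; ring
  have h2 : (∑ j ∈ Finset.range (d+1), if j = k then ((k:ℝ) * ((n:ℝ) - 2) / ((d:ℝ) * ((n:ℝ) - 1))) * (1 - (n:ℝ) * (j:ℝ) / ((d:ℝ) * ((n:ℝ) - 1))) else 0)
      = ((k:ℝ) * ((n:ℝ) - 2) / ((d:ℝ) * ((n:ℝ) - 1))) * (1 - (n:ℝ) * (k:ℝ) / ((d:ℝ) * ((n:ℝ) - 1))) := by
    rw [Finset.sum_ite_eq' (Finset.range (d+1)) k, if_pos (by simp; omega)]
  have h3 : (∑ j ∈ Finset.range (d+1), if j = k + 1 then (((d:ℝ) - (k:ℝ)) / (d:ℝ)) * (1 - (n:ℝ) * (j:ℝ) / ((d:ℝ) * ((n:ℝ) - 1))) else 0)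
      = (((d:ℝ) - (k:ℝ)) / (d:ℝ)) * (1 - (n:ℝ) * ((k:ℝ) + 1) / ((d:ℝ) * ((n:ℝ) - 1))) := by
    rcases eq_or_lt_of_le hk with he | hlt
    · rw [Finset.sum_eq_zero (fun j hj => by rw [if_neg]; simp at hj; omega)]
      rw [he]; simp
    · rw [Finset.sum_ite_eq' (Finset.range (d+1)) (k+1), if_pos (by simp; omega)]
      push_cast; ring
  rw [h1, h2, h3]
  field_simp
  ring
end
end

section
/- For every n ≥ 3, d ≥ 2, and every state x ∈ {0,…,d}, the one-step expected squared increment of the eigenfunction Φ(x) = 1 − nx/(d(n−1)) under the RWBD chain satisfies Σ_{y=0}^d P*(x,y)·(Φ(y) − Φ(x))² = n²·(d(n−1) + x(2−n)) / (d³(n−1)³) ≤ n² / (d²(n−1)²). -/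
open Finset

noncomputable section

/-- One-step expected squared increment of `Φ(x) = 1 - nx/(d(n-1))` under the RWBD
chain: it equals `n²(d(n-1)+x(2-n))/(d³(n-1)³)` and is at most `n²/(d²(n-1)²)`. -/
theorem rwbd_phi_increment (n d : ℕ) (hn : 3 ≤ n) (hd : 2 ≤ d) (x : Fin (d + 1))
    (Φ : Fin (d + 1) → ℝ)
    (hΦ : ∀ y : Fin (d + 1), Φ y = 1 - (n : ℝ) * ((y : ℕ) : ℝ) / ((d : ℝ) * ((n : ℝ) - 1))) :
    (∑ y : Fin (d + 1), BD.P n d x y * (Φ y - Φ x) ^ 2 =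
        (n : ℝ) ^ 2 * ((d : ℝ) * ((n : ℝ) - 1) + ((x : ℕ) : ℝ) * (2 - (n : ℝ))) /
          ((d : ℝ) ^ 3 * ((n : ℝ) - 1) ^ 3)) ∧
    (∑ y : Fin (d + 1), BD.P n d x y * (Φ y - Φ x) ^ 2 ≤
        (n : ℝ) ^ 2 / ((d : ℝ) ^ 2 * ((n : ℝ) - 1) ^ 2)) := by
  have ha : (x:ℕ) ≤ d := Nat.lt_succ_iff.mp x.isLt
  set a : ℕ := (x:ℕ) with ha_def
  have hd0 : (0:ℝ) < d := by exact_mod_cast Nat.lt_of_lt_of_le (by norm_num) hd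
  have hn3 : (3:ℝ) ≤ n := by exact_mod_cast hn
  have hn1 : (0:ℝ) < (n:ℝ) - 1 := by linarith
  have haR : ((a:ℕ):ℝ) ≤ d := by exact_mod_cast ha
  set c : ℝ := (n:ℝ) / ((d:ℝ) * ((n:ℝ) - 1)) with hc
  have key : ∑ y : Fin (d + 1), BD.P n d x y * (Φ y - Φ x) ^ 2 =
      ((a:ℝ) / ((d:ℝ) * ((n:ℝ)-1))) * c^2 + (((d:ℝ) - a) / d) * c^2 := by
    have step1 : ∑ y : Fin (d + 1), BD.P n d x y * (Φ y - Φ x) ^ 2 =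
        ∑ k ∈ Finset.range (d+1),
          ((if k + 1 = a then (a:ℝ) / ((d:ℝ) * ((n:ℝ) - 1))
            else if k = a then (a:ℝ) * ((n:ℝ) - 2) / ((d:ℝ) * ((n:ℝ) - 1))
            else if k = a + 1 then ((d:ℝ) - (a:ℝ)) / (d:ℝ)
            else 0) * (c^2 * ((k:ℝ) - (a:ℝ))^2)) := by
      rw [← Fin.sum_univ_eq_sum_range]
      refine Finset.sum_congr rfl fun y _ => ?_
      have hφ : (Φ y - Φ x) ^ 2 = c^2 * (((y:ℕ):ℝ) - (a:ℝ))^2 := by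
        rw [hΦ y, hΦ x, hc]
        field_simp
        ring
      rw [hφ]
      simp [BD.P, ha_def]
    rw [step1]
    have step2 : ∀ k ∈ Finset.range (d+1),
        ((if k + 1 = a then (a:ℝ) / ((d:ℝ) * ((n:ℝ) - 1))
          else if k = a then (a:ℝ) * ((n:ℝ) - 2) / ((d:ℝ) * ((n:ℝ) - 1))
          else if k = a + 1 then ((d:ℝ) - (a:ℝ)) / (d:ℝ)
          else 0) * (c^2 * ((k:ℝ) - (a:ℝ))^2)) =
        (if k + 1 = a then ((a:ℝ) / ((d:ℝ) * ((n:ℝ) - 1))) * c^2 else 0)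
        + (if k = a + 1 then (((d:ℝ) - (a:ℝ)) / (d:ℝ)) * c^2 else 0) := by
      intro k _
      by_cases h1 : k + 1 = a
      · have hk : (a:ℝ) = (k:ℝ) + 1 := by exact_mod_cast h1.symm
        have h2 : ¬ k = a + 1 := by omega
        simp only [if_pos h1, if_neg h2]
        rw [hk]; ring
      · by_cases h2 : k = a
        · have h3 : ¬ k = a + 1 := by omega
          subst h2
          simp only [if_neg h1, if_neg h3, if_pos rfl]
          ring
        · by_cases h3 : k = a + 1
          · have hk : (k:ℝ) = (a:ℝ) + 1 := by exact_mod_cast h3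
            simp only [if_neg h1, if_neg h2, if_pos h3]
            rw [hk]; ring
          · simp [h1, h2, h3]
    rw [Finset.sum_congr rfl step2, Finset.sum_add_distrib]
    have sum1 : (∑ k ∈ Finset.range (d+1),
        if k + 1 = a then ((a:ℝ) / ((d:ℝ) * ((n:ℝ) - 1))) * c^2 else 0)
        = ((a:ℝ) / ((d:ℝ) * ((n:ℝ)-1))) * c^2 := by
      rcases Nat.eq_zero_or_pos a with h0 | hpos
      · simp [h0]
      · have hiff : ∀ k, (k + 1 = a) ↔ (k = a - 1) := by intro k; omega
        simp only [hiff]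
        rw [Finset.sum_ite_eq' (Finset.range (d+1)) (a-1)]
        rw [if_pos (Finset.mem_range.mpr (by omega))]
    have sum2 : (∑ k ∈ Finset.range (d+1),
        if k = a + 1 then (((d:ℝ) - (a:ℝ)) / (d:ℝ)) * c^2 else 0)
        = (((d:ℝ) - (a:ℝ)) / (d:ℝ)) * c^2 := by
      rcases eq_or_lt_of_le ha with h0 | hlt
      · have hz : ∀ k ∈ Finset.range (d+1),
            (if k = a + 1 then (((d:ℝ) - (a:ℝ)) / (d:ℝ)) * c^2 else 0) = 0 := by
          intro k hk
          rw [Finset.mem_range] at hk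
          rw [if_neg (by omega)]
        have hcast : ((a:ℕ):ℝ) = (d:ℝ) := by exact_mod_cast h0
        rw [Finset.sum_eq_zero hz, hcast]
        ring
      · rw [Finset.sum_ite_eq' (Finset.range (d+1)) (a+1)]
        rw [if_pos (Finset.mem_range.mpr (by omega))]
    rw [sum1, sum2]
  have heq : ∑ y : Fin (d + 1), BD.P n d x y * (Φ y - Φ x) ^ 2 =
      (n : ℝ) ^ 2 * ((d : ℝ) * ((n : ℝ) - 1) + ((a:ℕ) : ℝ) * (2 - (n : ℝ))) /
        ((d : ℝ) ^ 3 * ((n : ℝ) - 1) ^ 3) := by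
    rw [key, hc]
    field_simp
    ring
  refine ⟨heq, ?_⟩
  rw [heq, div_le_div_iff₀ (by positivity) (by positivity)]
  have ha0 : (0:ℝ) ≤ (a:ℝ) := Nat.cast_nonneg a
  nlinarith [mul_nonneg (mul_nonneg ha0 (by linarith : (0:ℝ) ≤ (n:ℝ)-2))
      (by positivity : (0:ℝ) ≤ (n:ℝ)^2*(d:ℝ)^2*((n:ℝ)-1)^2)]
end
end
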